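/- arXiv:2208.12282 — 4 statements merged into one kernel-verified Lean document; each statement's English description precedes it below -/
import Mathlib

section
/- Let h ∈ H_{r,n} with r < n, h(r) = n, and exactly one j ∈ [r] with h(j) = r (necessarily j < r). Define g', g'' ∈ H_{r−1,n} on [r−1]∪{n} by: g'(i) = h(i) for i ∈ [r−1] with i ≠ j and g'(j) = n; g''(i) = h(i) for i ∈ [r−1] with i ≠ j and g''(j) = r−1. Then for every N ≥ 1, csf_q^N(h) = csf_q^N(g') + q·[n−r]_q · csf_q^N(g''). (This is formula (74) of Corollary 48(2), expressed via chromatic quasisymmetric functions using the paper's generalized Shareshian–Wachs theorem.) -/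
namespace GenHess

open scoped Classical

noncomputable section

/-- The vertex set `I ∪ {n}` of the weighted graph of a generalized Hessenberg function. -/
def verts (n : ℕ) (I : Finset ℕ) : Finset ℕ := insert n I

/-- `h : I ∪ {n} → I ∪ {n}` is a generalized Hessenberg function for `(I, n)`,
with `I ⊆ {1, …, n-1}`, `h i ≥ i`, and `h` weakly increasing on `I ∪ {n}`. -/
def IsGenHess (n : ℕ) (I : Finset ℕ) (h : ℕ → ℕ) : Prop :=
  (∀ i ∈ I, 1 ≤ i ∧ i ≤ n - 1) ∧
  (∀ i ∈ verts n I, h i ∈ verts n I) ∧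
  (∀ i ∈ verts n I, i ≤ h i) ∧
  (∀ i ∈ verts n I, ∀ j ∈ verts n I, i ≤ j → h i ≤ h j)

/-- The weight `w_h(i_k) = i_k - i_{k-1}` of a vertex: `v` minus the largest vertex
below `v` (or `0` if there is none). -/
def wt (n : ℕ) (I : Finset ℕ) (v : ℕ) : ℕ :=
  v - ((verts n I).filter (fun u => u < v)).sup id

/-- A proper coloring of the weighted graph `(Γ_h, w_h)` with colors in `[N]`:
each vertex `v` gets a set of colors of size `w_h(v)`, and adjacent vertices get
disjoint color sets (there is an edge `{i,j}` whenever `i < j ≤ h i`). -/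
def IsProper {N : ℕ} (n : ℕ) (I : Finset ℕ) (h : ℕ → ℕ)
    (γ : {x // x ∈ verts n I} → Finset (Fin N)) : Prop :=
  (∀ v : {x // x ∈ verts n I}, (γ v).card = wt n I v.val) ∧
  ∀ v u : {x // x ∈ verts n I}, v.val < u.val → u.val ≤ h v.val → Disjoint (γ v) (γ u)

/-- The ascent statistic `asc_h(γ) = Σ_{edges i<j} #{(a,b) ∈ γ(i)×γ(j) : a < b}`. -/
def asc {N : ℕ} (n : ℕ) (I : Finset ℕ) (h : ℕ → ℕ)
    (γ : {x // x ∈ verts n I} → Finset (Fin N)) : ℕ :=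
  ∑ v : {x // x ∈ verts n I}, ∑ u : {x // x ∈ verts n I},
    if v.val < u.val ∧ u.val ≤ h v.val then
      ((γ v ×ˢ γ u).filter fun ab => ab.1 < ab.2).card
    else 0

/-- The truncated chromatic quasisymmetric function `csf_q^N(h)`, as an element of
`ℤ[x_1,…,x_N][q]` (the outer `Polynomial.X` is `q`). -/
def csf (n : ℕ) (I : Finset ℕ) (h : ℕ → ℕ) (N : ℕ) :
    Polynomial (MvPolynomial (Fin N) ℤ) :=
  ∑ γ ∈ Finset.univ.filter
      (fun γ : {x // x ∈ verts n I} → Finset (Fin N) => IsProper n I h γ),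
    Polynomial.C (∏ v : {x // x ∈ verts n I}, ∏ a ∈ γ v, MvPolynomial.X a) *
      Polynomial.X ^ asc n I h γ

/-- The `q`-integer `[m]_q = 1 + q + ⋯ + q^{m-1}`. -/
def qNum (R : Type) [CommRing R] (m : ℕ) : Polynomial R :=
  ∑ i ∈ Finset.range m, Polynomial.X ^ i

/-- The `q`-factorial `[m]_q!`. -/
def qFact (R : Type) [CommRing R] : ℕ → Polynomial R
  | 0 => 1
  | m + 1 => qNum R (m + 1) * qFact R m

/-- The elementary symmetric polynomial `e_m(x_1,…,x_N)`, viewed as a constant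
polynomial in `q`. -/
def esym (N m : ℕ) : Polynomial (MvPolynomial (Fin N) ℤ) :=
  Polynomial.C (MvPolynomial.esymm (Fin N) ℤ m)

end

end GenHess

/-!
Deleting the vertex `r` from a proper colouring `γ` of `h` and returning its single colour `c`
to the vertex `n` gives a proper colouring `η` of `g''` together with a colour
`c ∈ η n \ η j`, and every such pair arises exactly once. If `η j = {b}`, the ascents of `γ`
are those of `η` plus `[b < c] + #{d ∈ η n | c < d}`. Summing `q` to this power over the
`n - r + 1` admissible `c` gives `q [n - r]_q`, plus `q ^ #{d ∈ η n | b < d}` exactly when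
`b ∉ η n`. The colourings `η` with `b ∉ η n` are the proper colourings of `g'`, which has the
one extra edge `{j, n}`, and this last exponent is the number of ascents along that edge.
-/

namespace GenHess

open Finset Polynomial

open scoped Classical

section Ascents

variable {α : Type*} [LinearOrder α]

def numAsc (A B : Finset α) : ℕ := #{ab ∈ A ×ˢ B | ab.1 < ab.2}

lemma numAsc_eq_sum (A B : Finset α) : numAsc A B = ∑ b ∈ B, #{a ∈ A | a < b} := by
  rw [numAsc, card_filter, sum_product_right]
  exact sum_congr rfl fun b _ => (card_filter _ _).symm

lemma numAsc_singleton_singleton (b c : α) : numAsc {b} {c} = if b < c then 1 else 0 := by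
  simp [numAsc_eq_sum, filter_singleton, apply_ite]

lemma numAsc_singleton_right (A : Finset α) (c : α) : numAsc A {c} = #{a ∈ A | a < c} := by
  simp [numAsc_eq_sum]

lemma numAsc_insert {a : α} {T : Finset α} (A : Finset α) (ha : a ∉ T) :
    numAsc A (insert a T) = numAsc A T + numAsc A {a} := by
  rw [numAsc_eq_sum, numAsc_eq_sum, sum_insert ha, numAsc_singleton_right, add_comm]

lemma numAsc_erase_add {c : α} {T : Finset α} (A : Finset α) (hc : c ∈ T) :
    numAsc A (T.erase c) + numAsc A {c} = numAsc A T := by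
  rw [← numAsc_insert A (notMem_erase c T), insert_erase hc]

lemma numAsc_singleton_erase (c : α) (T : Finset α) :
    numAsc {c} (T.erase c) = numAsc {c} T := by
  by_cases hc : c ∈ T
  · rw [← numAsc_erase_add {c} hc, numAsc_singleton_singleton, if_neg (lt_irrefl c), add_zero]
  · rw [erase_eq_of_notMem hc]

lemma numAsc_singleton_eq_zero {a : α} {T : Finset α} (ha : ∀ x ∈ T, x ≤ a) :
    numAsc {a} T = 0 := by
  simpa [numAsc_eq_sum, filter_singleton] using fun x hx => ha x hx

lemma numAsc_singleton_insert_of_lt {a c : α} {s : Finset α} (has : a ∉ s) (hc : c < a) :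
    numAsc {c} (insert a s) = numAsc {c} s + 1 := by
  rw [numAsc_insert _ has, numAsc_singleton_singleton, if_pos hc]

end Ascents

section QCount

variable {α : Type*} [LinearOrder α] (R : Type) [CommRing R]

lemma qNum_succ (m : ℕ) : qNum R (m + 1) = X * qNum R m + 1 := by
  rw [qNum, sum_range_succ', qNum, mul_sum]
  simp [pow_succ, mul_comm]

lemma sum_pow_numAsc_singleton (T : Finset α) :
    ∑ c ∈ T, (X : R[X]) ^ numAsc {c} T = qNum R #T := by
  induction T using Finset.induction_on_max with
  | empty => simp [qNum]
  | insert a s ha ih =>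
    have has : a ∉ s := fun h => lt_irrefl a (ha a h)
    rw [sum_insert has, card_insert_of_notMem has, qNum_succ, ← ih, mul_sum,
      numAsc_singleton_eq_zero (by simpa using fun x hx => (ha x hx).le), pow_zero, add_comm]
    congr 1
    refine sum_congr rfl fun c hc => ?_
    rw [numAsc_singleton_insert_of_lt has (ha c hc), pow_succ']

lemma sum_pow_numAsc_erase_add_one (b : α) (T : Finset α) :
    ∑ c ∈ T.erase b, (X : R[X]) ^ (numAsc {b} {c} + numAsc {c} T) + 1 =
      qNum R #T + if b ∈ T then 0 else X ^ numAsc {b} T := by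
  induction T using Finset.induction_on_max with
  | empty => simp [qNum, numAsc]
  | insert a s ha ih =>
    have has : a ∉ s := fun h => lt_irrefl a (ha a h)
    have htop : numAsc {a} (insert a s) = 0 :=
      numAsc_singleton_eq_zero (by simpa using fun x hx => (ha x hx).le)
    have hshift : ∀ t ⊆ s,
        ∑ c ∈ t, (X : R[X]) ^ (numAsc {b} {c} + numAsc {c} (insert a s)) =
          X * ∑ c ∈ t, X ^ (numAsc {b} {c} + numAsc {c} s) := fun t hts => by
      rw [mul_sum]
      refine sum_congr rfl fun c hc => ?_
      rw [numAsc_singleton_insert_of_lt has (ha c (hts hc)), ← add_assoc, pow_succ']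
    rw [card_insert_of_notMem has, qNum_succ]
    rcases eq_or_ne b a with rfl | hba
    · rw [erase_insert has, hshift s subset_rfl, if_pos (mem_insert_self b s), add_zero,
        ← sum_pow_numAsc_singleton R s]
      congr 2
      refine sum_congr rfl fun c hc => ?_
      rw [numAsc_singleton_singleton, if_neg (ha c hc).not_gt, zero_add]
    rw [erase_insert_of_ne hba.symm, sum_insert (fun h => has (mem_of_mem_erase h)), htop, add_zero,
      hshift _ (erase_subset b s), numAsc_singleton_singleton]
    by_cases hbs : b ∈ s
    · rw [if_pos hbs] at ih
      rw [if_pos (ha b hbs), if_pos (mem_insert_of_mem hbs)]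
      linear_combination X * ih
    have hbT : b ∉ insert a s := by simp [hba, hbs]
    rw [if_neg hbs] at ih
    rw [if_neg hbT]
    rcases lt_or_gt_of_ne hba with hlt | hgt
    · rw [if_pos hlt, numAsc_singleton_insert_of_lt has hlt]
      linear_combination X * ih
    · rw [numAsc_singleton_eq_zero fun x hx => ((ha x hx).trans hgt).le] at ih
      rw [if_neg hgt.not_gt, numAsc_singleton_eq_zero (by
        simpa using ⟨hgt.le, fun x hx => ((ha x hx).trans hgt).le⟩)]
      linear_combination X * ih

lemma sum_pow_numAsc_sdiff_singleton (b : α) {T : Finset α} {k : ℕ} (hT : #T = k + 1) :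
    ∑ c ∈ T \ {b}, (X : R[X]) ^ (numAsc {b} {c} + numAsc {c} T) =
      X * qNum R k + if Disjoint {b} T then X ^ numAsc {b} T else 0 := by
  have := sum_pow_numAsc_erase_add_one R b T
  rw [hT, qNum_succ] at this
  rw [sdiff_singleton_eq_erase]
  simp only [disjoint_singleton_left]
  split_ifs at this ⊢ <;> linear_combination this

end QCount

section Vertices

variable {n m v : ℕ}

lemma sup_Icc_one (k : ℕ) : (Icc 1 k).sup id = k := by
  rcases Nat.eq_zero_or_pos k with rfl | hk
  · rfl
  · exact le_antisymm (Finset.sup_le fun x hx => (mem_Icc.mp hx).2)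
      (le_sup (f := id) (right_mem_Icc.mpr hk))

@[simp]
lemma mem_verts_Icc : v ∈ verts n (Icc 1 m) ↔ v = n ∨ 1 ≤ v ∧ v ≤ m := by
  simp [verts]

lemma verts_Icc_succ : verts n (Icc 1 (m + 1)) = insert (m + 1) (verts n (Icc 1 m)) := by
  ext x
  simp only [mem_verts_Icc, mem_insert]
  omega

lemma wt_Icc_of_le (hmn : m < n) (hv1 : 1 ≤ v) (hvm : v ≤ m) : wt n (Icc 1 m) v = 1 := by
  have hbelow : {u ∈ verts n (Icc 1 m) | u < v} = Icc 1 (v - 1) := by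
    ext x
    simp only [mem_filter, mem_verts_Icc, mem_Icc]
    omega
  rw [wt, hbelow, sup_Icc_one]
  omega

lemma wt_Icc_top (hmn : m < n) : wt n (Icc 1 m) n = n - m := by
  have hbelow : {u ∈ verts n (Icc 1 m) | u < n} = Icc 1 m := by
    ext x
    simp only [mem_filter, mem_verts_Icc, mem_Icc]
    omega
  rw [wt, hbelow, sup_Icc_one]

end Vertices

section Colorings

variable {N n : ℕ} {I : Finset ℕ} {h : ℕ → ℕ}

def restrictColoring (V : Finset ℕ) (F : ℕ → Finset (Fin N)) :
    {x // x ∈ V} → Finset (Fin N) :=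
  fun v => F v

def extendColoring {V : Finset ℕ} (γ : {x // x ∈ V} → Finset (Fin N)) :
    ℕ → Finset (Fin N) :=
  fun x => if hx : x ∈ V then γ ⟨x, hx⟩ else ∅

@[simp]
lemma restrictColoring_extendColoring {V : Finset ℕ} (γ : {x // x ∈ V} → Finset (Fin N)) :
    restrictColoring V (extendColoring γ) = γ := by
  funext v
  simp [restrictColoring, extendColoring]

lemma extendColoring_restrictColoring {V : Finset ℕ} (F : ℕ → Finset (Fin N)) {x : ℕ}
    (hx : x ∈ V) : extendColoring (restrictColoring V F) x = F x := by
  simp [extendColoring, restrictColoring, hx]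

lemma isProper_restrictColoring_iff (F : ℕ → Finset (Fin N)) :
    IsProper n I h (restrictColoring (verts n I) F) ↔
      (∀ v ∈ verts n I, #(F v) = wt n I v) ∧
        ∀ v ∈ verts n I, ∀ u ∈ verts n I, v < u → u ≤ h v → Disjoint (F v) (F u) := by
  simp [IsProper, restrictColoring]

lemma asc_restrictColoring (F : ℕ → Finset (Fin N)) :
    asc n I h (restrictColoring (verts n I) F) =
      ∑ v ∈ verts n I, ∑ u ∈ verts n I,
        if v < u ∧ u ≤ h v then numAsc (F v) (F u) else 0 := by
  rw [asc, ← sum_coe_sort (verts n I)]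
  refine Fintype.sum_congr _ _ fun v => ?_
  rw [← sum_coe_sort (verts n I)]
  rfl

lemma prod_restrictColoring (V : Finset ℕ) (F : ℕ → Finset (Fin N)) :
    ∏ v : {x // x ∈ V}, ∏ a ∈ restrictColoring V F v, MvPolynomial.X (R := ℤ) a =
      ∏ v ∈ V, ∏ a ∈ F v, MvPolynomial.X a :=
  prod_coe_sort V fun v => ∏ a ∈ F v, MvPolynomial.X a

end Colorings

section UpdateTop

variable {N n m j : ℕ} {h : ℕ → ℕ}

lemma edge_update_top_iff (hjm : j ≤ m) (hmn : m < n) {v u : ℕ}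
    (hu : u ∈ verts n (Icc 1 m)) :
    v < u ∧ u ≤ Function.update h j n v ↔
      (v < u ∧ u ≤ Function.update h j m v) ∨ (v = j ∧ u = n) := by
  rw [mem_verts_Icc] at hu
  by_cases hvj : v = j
  · subst hvj
    simp only [Function.update_self, true_and]
    omega
  · simp only [Function.update_of_ne hvj, hvj, false_and, or_false]

lemma isProper_update_top_iff (hj1 : 1 ≤ j) (hjm : j ≤ m) (hmn : m < n)
    (F : ℕ → Finset (Fin N)) :
    IsProper n (Icc 1 m) (Function.update h j n) (restrictColoring _ F) ↔
      IsProper n (Icc 1 m) (Function.update h j m) (restrictColoring _ F) ∧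
        Disjoint (F j) (F n) := by
  simp only [isProper_restrictColoring_iff]
  constructor
  · rintro ⟨hcard, hdisj⟩
    refine ⟨⟨hcard, fun v hv u hu hvu hle => hdisj v hv u hu hvu
      ((edge_update_top_iff hjm hmn hu).2 (Or.inl ⟨hvu, hle⟩)).2⟩, ?_⟩
    exact hdisj j (by simp; omega) n (by simp) (by omega) (by simp)
  · rintro ⟨⟨hcard, hdisj⟩, hjn⟩
    refine ⟨hcard, fun v hv u hu hvu hle => ?_⟩
    rcases (edge_update_top_iff hjm hmn hu).1 ⟨hvu, hle⟩ with ⟨-, hle'⟩ | ⟨rfl, rfl⟩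
    · exact hdisj v hv u hu hvu hle'
    · exact hjn

lemma asc_update_top (hj1 : 1 ≤ j) (hjm : j ≤ m) (hmn : m < n) (F : ℕ → Finset (Fin N)) :
    asc n (Icc 1 m) (Function.update h j n) (restrictColoring _ F) =
      asc n (Icc 1 m) (Function.update h j m) (restrictColoring _ F) + numAsc (F j) (F n) := by
  have hsplit : ∀ v ∈ verts n (Icc 1 m), ∀ u ∈ verts n (Icc 1 m),
      (if v < u ∧ u ≤ Function.update h j n v then numAsc (F v) (F u) else 0) =
        (if v < u ∧ u ≤ Function.update h j m v then numAsc (F v) (F u) else 0) +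
          if v = j ∧ u = n then numAsc (F v) (F u) else 0 := by
    intro v _ u hu
    rw [if_congr (edge_update_top_iff hjm hmn hu) rfl rfl]
    by_cases hvj : v = j ∧ u = n
    · obtain ⟨rfl, rfl⟩ := hvj
      simp
      omega
    · simp [hvj]
  simp only [asc_restrictColoring]
  rw [sum_congr rfl fun v hv => sum_congr rfl (hsplit v hv)]
  simp [sum_add_distrib, ite_and, show 1 ≤ j ∧ j ≤ m from ⟨hj1, hjm⟩]

lemma csf_update_top (hj1 : 1 ≤ j) (hjm : j ≤ m) (hmn : m < n) :
    csf n (Icc 1 m) (Function.update h j n) N =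
      ∑ η ∈ univ.filter (IsProper n (Icc 1 m) (Function.update h j m)),
        if Disjoint (extendColoring η j) (extendColoring η n) then
          C (∏ v, ∏ a ∈ η v, MvPolynomial.X a) *
            X ^ (asc n (Icc 1 m) (Function.update h j m) η +
              numAsc (extendColoring η j) (extendColoring η n))
        else 0 := by
  rw [csf, sum_filter, sum_filter]
  refine sum_congr rfl fun η _ => ?_
  have hP := isProper_update_top_iff (h := h) hj1 hjm hmn (extendColoring η)
  have hasc := asc_update_top (h := h) hj1 hjm hmn (extendColoring η)
  rw [restrictColoring_extendColoring] at hP hasc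
  rw [hasc]
  by_cases hη : IsProper n (Icc 1 m) (Function.update h j m) η <;> simp [hP, hη]

end UpdateTop

/-- The shape of `h` near the vertex `r = m + 1` that the blow-up formula removes. -/
structure BlowupShape (n m j : ℕ) (h : ℕ → ℕ) : Prop where
  succ_lt : m + 1 < n
  one_le : 1 ≤ j
  le : j ≤ m
  apply_self : h j = m + 1
  apply_of_lt : ∀ v, 1 ≤ v → v < j → h v ≤ m
  apply_of_gt : ∀ v, j < v → v ≤ m + 1 → h v = n

section Shape

variable {N n m j : ℕ} {h : ℕ → ℕ}

lemma IsGenHess.blowupShape (hgen : IsGenHess n (Icc 1 (m + 1)) h) (hmn : m + 1 < n)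
    (htop : h (m + 1) = n) (hj : j ∈ Icc 1 (m + 1)) (hjv : h j = m + 1)
    (huniq : ∀ i ∈ Icc 1 (m + 1), h i = m + 1 → i = j) : BlowupShape n m j h := by
  obtain ⟨-, hmaps, -, hmono⟩ := hgen
  rw [mem_Icc] at hj
  have hjm : j ≤ m := by
    by_contra hjm
    rw [show j = m + 1 by omega, htop] at hjv
    omega
  have hV : ∀ v, 1 ≤ v → v ≤ m + 1 → v ∈ verts n (Icc 1 (m + 1)) := fun v _ _ => by
    simp; omega
  have hjV := hV j hj.1 hj.2
  refine ⟨hmn, hj.1, hjm, hjv, fun v hv hvj => ?_, fun v hjv' hvm => ?_⟩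
  · have hle := hmono v (hV v hv (by omega)) j hjV hvj.le
    have hne : h v ≠ m + 1 := fun he => hvj.ne (huniq v (by simp; omega) he)
    omega
  · have hle := hmono j hjV v (hV v (by omega) hvm) hjv'.le
    have hne : h v ≠ m + 1 := fun he => hjv'.ne' (huniq v (by simp; omega) he)
    have hmem := hmaps v (hV v (by omega) hvm)
    rw [mem_verts_Icc] at hmem
    omega

namespace BlowupShape

lemma le_of_succ_le_apply (hs : BlowupShape n m j h) {v : ℕ} (hv : 1 ≤ v)
    (hle : m + 1 ≤ h v) : j ≤ v := by
  by_contra! hvj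
  have := hs.apply_of_lt v hv hvj
  omega

lemma update_apply_of_gt (hs : BlowupShape n m j h) {v : ℕ} (hjv : j < v) (hvm : v ≤ m) :
    Function.update h j m v = n := by
  rw [Function.update_of_ne (by omega), hs.apply_of_gt v hjv (by omega)]

lemma update_apply_le (hs : BlowupShape n m j h) (v : ℕ) : Function.update h j m v ≤ h v := by
  rcases eq_or_ne v j with rfl | hvj
  · simp [hs.apply_self]
  · rw [Function.update_of_ne hvj]

lemma le_update_apply (hs : BlowupShape n m j h) {v u : ℕ} (hum : u ≤ m) (hle : u ≤ h v) :
    u ≤ Function.update h j m v := by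
  rcases eq_or_ne v j with rfl | hvj
  · simpa using hum
  · rwa [Function.update_of_ne hvj]

end BlowupShape

end Shape

section SplitColoring

variable {N n m j : ℕ} {h : ℕ → ℕ}

def splitColoring (r n : ℕ) (F : ℕ → Finset (Fin N)) (c : Fin N) : ℕ → Finset (Fin N) :=
  fun x => if x = r then {c} else if x = n then (F n).erase c else F x

def mergeColoring (r n : ℕ) (F : ℕ → Finset (Fin N)) : ℕ → Finset (Fin N) :=
  fun x => if x = n then F r ∪ F n else F x

variable {r : ℕ} {F : ℕ → Finset (Fin N)} {c : Fin N}

lemma splitColoring_self : splitColoring r n F c r = {c} := if_pos rfl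

lemma splitColoring_top (hrn : r ≠ n) : splitColoring r n F c n = (F n).erase c := by
  simp [splitColoring, hrn.symm]

lemma splitColoring_of_ne {x : ℕ} (hxr : x ≠ r) (hxn : x ≠ n) :
    splitColoring r n F c x = F x := by
  simp [splitColoring, hxr, hxn]

lemma mergeColoring_top : mergeColoring r n F n = F r ∪ F n := if_pos rfl

lemma mergeColoring_of_ne {x : ℕ} (hxn : x ≠ n) : mergeColoring r n F x = F x := if_neg hxn

lemma isProper_splitColoring (hs : BlowupShape n m j h)
    (hF : IsProper n (Icc 1 m) (Function.update h j m) (restrictColoring _ F))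
    (hcn : c ∈ F n) (hcj : c ∉ F j) :
    IsProper n (Icc 1 (m + 1)) h (restrictColoring _ (splitColoring (m + 1) n F c)) := by
  rw [isProper_restrictColoring_iff] at hF ⊢
  obtain ⟨hcard, hdisj⟩ := hF
  have hmn := hs.succ_lt
  have hdisj_n : ∀ v, j < v → v ≤ m → Disjoint (F v) (F n) := fun v hjv hvm =>
    hdisj v (by simp; omega) n (by simp) (by omega) (hs.update_apply_of_gt hjv hvm).ge
  refine ⟨fun v hv => ?_, fun v hv u hu hvu huv => ?_⟩
  · rw [mem_verts_Icc] at hv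
    by_cases hvr : v = m + 1
    · rw [hvr, splitColoring_self, card_singleton, wt_Icc_of_le hmn (by omega) le_rfl]
    by_cases hvn : v = n
    · rw [hvn, splitColoring_top hmn.ne, card_erase_of_mem hcn, hcard n (by simp),
        wt_Icc_top (by omega), wt_Icc_top hmn]
      omega
    · rw [splitColoring_of_ne hvr hvn, hcard v (by simp; omega),
        wt_Icc_of_le hmn (by omega) (by omega), wt_Icc_of_le (by omega) (by omega) (by omega)]
  rw [mem_verts_Icc] at hv hu
  by_cases hur : u = m + 1
  · have hjv := hs.le_of_succ_le_apply (v := v) (by omega) (by omega)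
    rw [hur, splitColoring_self, splitColoring_of_ne (by omega) (by omega),
      disjoint_singleton_right]
    rcases hjv.eq_or_lt with rfl | hjv
    · exact hcj
    · exact fun hcv => disjoint_left.mp (hdisj_n v hjv (by omega)) hcv hcn
  by_cases hun : u = n
  · subst hun
    rw [splitColoring_top hmn.ne]
    by_cases hvr : v = m + 1
    · rw [hvr, splitColoring_self, disjoint_singleton_left]
      exact notMem_erase c _
    · have hjv := hs.le_of_succ_le_apply (v := v) (by omega) (by omega)
      have hvj : v ≠ j := fun hvj => by rw [hvj, hs.apply_self] at huv; omega
      rw [splitColoring_of_ne hvr (by omega)]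
      exact (hdisj_n v (by omega) (by omega)).mono_right (erase_subset c _)
  · rw [splitColoring_of_ne (by omega) (by omega), splitColoring_of_ne hur hun]
    exact hdisj v (by simp; omega) u (by simp; omega) hvu (hs.le_update_apply (by omega) huv)

lemma isProper_mergeColoring (hs : BlowupShape n m j h)
    (hF : IsProper n (Icc 1 (m + 1)) h (restrictColoring _ F)) :
    IsProper n (Icc 1 m) (Function.update h j m)
      (restrictColoring _ (mergeColoring (m + 1) n F)) := by
  rw [isProper_restrictColoring_iff] at hF ⊢
  obtain ⟨hcard, hdisj⟩ := hF
  have hmn := hs.succ_lt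
  have hV : ∀ v, 1 ≤ v → v ≤ m + 1 → v ∈ verts n (Icc 1 (m + 1)) := fun v _ _ => by
    simp; omega
  have hrn : Disjoint (F (m + 1)) (F n) :=
    hdisj _ (by simp) _ (by simp) hmn (hs.apply_of_gt _ (by have := hs.le; omega) le_rfl).ge
  refine ⟨fun v hv => ?_, fun v hv u hu hvu huv => ?_⟩
  · rw [mem_verts_Icc] at hv
    rcases hv with rfl | hv
    · rw [mergeColoring_top, card_union_of_disjoint hrn, hcard _ (by simp), hcard _ (by simp),
        wt_Icc_of_le hmn (by omega) le_rfl, wt_Icc_top hmn, wt_Icc_top (by omega)]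
      omega
    · rw [mergeColoring_of_ne (by omega), hcard v (hV v hv.1 (by omega)),
        wt_Icc_of_le hmn hv.1 (by omega), wt_Icc_of_le (by omega) hv.1 hv.2]
  rw [mem_verts_Icc] at hv hu
  have hvV := hV v (by omega) (by omega)
  have hle := huv.trans (hs.update_apply_le v)
  rw [mergeColoring_of_ne (show v ≠ n by omega)]
  rcases hu with rfl | hu
  · have hvj : v ≠ j := fun hvj => by simp [hvj] at huv; omega
    have hjv := (hs.le_of_succ_le_apply (v := v) (by omega) (by omega)).lt_of_ne' hvj
    rw [mergeColoring_top, disjoint_union_right]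
    exact ⟨hdisj v hvV _ (by simp) (by omega) (hs.apply_of_gt v hjv (by omega) ▸ hmn.le),
      hdisj v hvV _ (by simp) hvu hle⟩
  · rw [mergeColoring_of_ne (show u ≠ n by omega)]
    exact hdisj v hvV u (hV u hu.1 (by omega)) hvu hle

lemma splitColoring_mergeColoring (hrn : r ≠ n) (hr : F r = {c}) (hcn : c ∉ F n) :
    splitColoring r n (mergeColoring r n F) c = F := by
  funext x
  by_cases hxr : x = r
  · rw [hxr, splitColoring_self, hr]
  by_cases hxn : x = n
  · rw [hxn, splitColoring_top hrn, mergeColoring_top, hr, ← insert_eq, erase_insert hcn]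
  · rw [splitColoring_of_ne hxr hxn, mergeColoring_of_ne hxn]

-- The edges `(v, m + 1)` and `(v, n)` of `h` together carry the ascents of the edge `(v, n)` of
-- `Function.update h j m`, except for `v = j`, which is not adjacent to `n` there.
lemma asc_summand_splitColoring (hs : BlowupShape n m j h) (hcn : c ∈ F n) {v u : ℕ}
    (hv : v ∈ verts n (Icc 1 m)) (hu : u ∈ verts n (Icc 1 m)) :
    (if v < u ∧ u ≤ h v then
        numAsc (splitColoring (m + 1) n F c v) (splitColoring (m + 1) n F c u) else 0) +
      (if u = n then
        if v < m + 1 ∧ m + 1 ≤ h v then numAsc (splitColoring (m + 1) n F c v) {c} else 0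
        else 0) =
    (if v < u ∧ u ≤ Function.update h j m v then numAsc (F v) (F u) else 0) +
      (if u = n then if v = j then numAsc (F j) {c} else 0 else 0) := by
  have hmn := hs.succ_lt
  have hjm := hs.le
  rw [mem_verts_Icc] at hv hu
  rcases hv with rfl | hv
  · simp [show ¬v < u by omega, show v ≠ j by omega, show ¬v ≤ m by omega]
  rw [splitColoring_of_ne (by omega) (by omega)]
  rcases hu with rfl | hu
  · rcases lt_trichotomy v j with hvj | rfl | hvj
    · have := hs.apply_of_lt v hv.1 hvj
      simp [hvj.ne, show ¬u ≤ h v by omega, show ¬m + 1 ≤ h v by omega]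
    · simp [hs.apply_self, show ¬u ≤ m + 1 by omega, show ¬u ≤ m by omega, hv.2]
    · rw [hs.update_apply_of_gt hvj hv.2, hs.apply_of_gt v hvj (by omega),
        splitColoring_top hmn.ne]
      simp [show v < u by omega, show v ≤ m by omega, hvj.ne', hmn.le, numAsc_erase_add _ hcn]
  · have hedge : v < u ∧ u ≤ h v ↔ v < u ∧ u ≤ Function.update h j m v := by
      rcases eq_or_ne v j with rfl | hvj
      · simp only [Function.update_self, hs.apply_self]
        omega
      · rw [Function.update_of_ne hvj]
    simp [splitColoring_of_ne (show u ≠ m + 1 by omega) (show u ≠ n by omega), hedge,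
      show u ≠ n by omega]

lemma asc_splitColoring (hs : BlowupShape n m j h) (hcn : c ∈ F n) :
    asc n (Icc 1 (m + 1)) h (restrictColoring _ (splitColoring (m + 1) n F c)) =
      asc n (Icc 1 m) (Function.update h j m) (restrictColoring _ F) +
        (numAsc (F j) {c} + numAsc {c} (F n)) := by
  set F' := splitColoring (m + 1) n F c
  have hmn := hs.succ_lt
  have hF'r : F' (m + 1) = {c} := splitColoring_self
  have hF'n : F' n = (F n).erase c := splitColoring_top hmn.ne
  have hnV : n ∈ verts n (Icc 1 m) := by simp
  have hrV : m + 1 ∉ verts n (Icc 1 m) := by simp; omega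
  have hjV : j ∈ verts n (Icc 1 m) := by simp [hs.one_le, hs.le]
  have hrow : ∀ v ∈ verts n (Icc 1 m),
      (if v < m + 1 ∧ m + 1 ≤ h v then numAsc (F' v) {c} else 0) +
        ∑ u ∈ verts n (Icc 1 m), (if v < u ∧ u ≤ h v then numAsc (F' v) (F' u) else 0) =
      ∑ u ∈ verts n (Icc 1 m),
          (if v < u ∧ u ≤ Function.update h j m v then numAsc (F v) (F u) else 0) +
        (if v = j then numAsc (F j) {c} else 0) := fun v hv => by
    have := sum_congr rfl fun u hu => asc_summand_splitColoring hs hcn hv hu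
    rwa [sum_add_distrib, sum_add_distrib, sum_ite_eq', sum_ite_eq', if_pos hnV, if_pos hnV,
      add_comm] at this
  have hrrow : ∑ u ∈ verts n (Icc 1 m),
      (if m + 1 < u ∧ u ≤ h (m + 1) then numAsc (F' (m + 1)) (F' u) else 0) =
      numAsc {c} (F n) := by
    rw [sum_eq_single_of_mem n hnV, hs.apply_of_gt (m + 1) (by have := hs.le; omega) le_rfl,
      if_pos ⟨hmn, le_rfl⟩, hF'n, hF'r, numAsc_singleton_erase]
    intro u hu hun
    rw [mem_verts_Icc] at hu
    rw [if_neg (by omega)]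
  simp only [asc_restrictColoring, verts_Icc_succ, sum_insert hrV, lt_irrefl, false_and,
    if_false, zero_add]
  rw [hrrow, hF'r, sum_congr rfl hrow, sum_add_distrib, sum_ite_eq' _ j, if_pos hjV]
  ring

lemma prod_splitColoring {M : Type*} [CommMonoid M] (f : Fin N → M) (hmn : m + 1 < n)
    (hcn : c ∈ F n) :
    ∏ v ∈ verts n (Icc 1 (m + 1)), ∏ a ∈ splitColoring (m + 1) n F c v, f a =
      ∏ v ∈ verts n (Icc 1 m), ∏ a ∈ F v, f a := by
  have hrV : m + 1 ∉ verts n (Icc 1 m) := by simp; omega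
  have hnI : n ∉ Icc 1 m := by simp; omega
  have hI : ∏ v ∈ Icc 1 m, ∏ a ∈ splitColoring (m + 1) n F c v, f a =
      ∏ v ∈ Icc 1 m, ∏ a ∈ F v, f a := prod_congr rfl fun v hv => by
    rw [mem_Icc] at hv
    rw [splitColoring_of_ne (by omega) (by omega)]
  rw [verts_Icc_succ, prod_insert hrV, verts, prod_insert hnI, prod_insert hnI, hI,
    splitColoring_self, splitColoring_top hmn.ne, prod_singleton, ← mul_assoc,
    mul_prod_erase _ _ hcn]

lemma restrictColoring_splitColoring_congr {F' : ℕ → Finset (Fin N)}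
    (hF : ∀ x ∈ verts n (Icc 1 m), F x = F' x) :
    restrictColoring (verts n (Icc 1 (m + 1))) (splitColoring (m + 1) n F c) =
      restrictColoring _ (splitColoring (m + 1) n F' c) := by
  funext ⟨x, hx⟩
  simp only [restrictColoring, splitColoring]
  split_ifs with hxr hxn
  · rfl
  · rw [hF n (by simp)]
  · exact hF x (by simp at hx ⊢; omega)

lemma eq_of_restrictColoring_splitColoring_eq (hmn : m + 1 < n) {F' : ℕ → Finset (Fin N)}
    {c' : Fin N} (hcn : c ∈ F n) (hcn' : c' ∈ F' n)
    (heq : restrictColoring (verts n (Icc 1 (m + 1))) (splitColoring (m + 1) n F c) =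
      restrictColoring _ (splitColoring (m + 1) n F' c')) :
    c = c' ∧ restrictColoring (verts n (Icc 1 m)) F = restrictColoring _ F' := by
  have hat : ∀ x ∈ verts n (Icc 1 (m + 1)),
      splitColoring (m + 1) n F c x = splitColoring (m + 1) n F' c' x :=
    fun x hx => congrFun heq ⟨x, hx⟩
  have hc : c = c' := by simpa [splitColoring_self] using hat (m + 1) (by simp)
  subst hc
  refine ⟨rfl, funext fun ⟨x, hx⟩ => ?_⟩
  have hx' := hat x (by simp at hx ⊢; omega)
  simp only [restrictColoring]
  by_cases hxn : x = n
  · rw [hxn, splitColoring_top hmn.ne, splitColoring_top hmn.ne] at hx'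
    rw [hxn, ← insert_erase hcn, hx', insert_erase hcn']
  · rwa [splitColoring_of_ne (by simp at hx; omega) hxn,
      splitColoring_of_ne (by simp at hx; omega) hxn] at hx'

lemma exists_splitColoring (hs : BlowupShape n m j h)
    {γ : {x // x ∈ verts n (Icc 1 (m + 1))} → Finset (Fin N)}
    (hγ : IsProper n (Icc 1 (m + 1)) h γ) :
    ∃ F : ℕ → Finset (Fin N), ∃ c,
      IsProper n (Icc 1 m) (Function.update h j m) (restrictColoring _ F) ∧
        c ∈ F n ∧ c ∉ F j ∧ restrictColoring _ (splitColoring (m + 1) n F c) = γ := by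
  have hmn := hs.succ_lt
  have hjm := hs.le
  rw [← restrictColoring_extendColoring γ] at hγ ⊢
  have hdisj := ((isProper_restrictColoring_iff _).mp hγ).2
  obtain ⟨c, hc⟩ : ∃ c, extendColoring γ (m + 1) = {c} :=
    card_eq_one.mp ((((isProper_restrictColoring_iff _).mp hγ).1 _ (by simp)).trans
      (wt_Icc_of_le hmn (by omega) le_rfl))
  have hcn : c ∉ extendColoring γ n := disjoint_left.mp
    (hdisj _ (by simp) _ (by simp) hmn (hs.apply_of_gt _ (by omega) le_rfl).ge) (by simp [hc])
  have hcj : c ∉ extendColoring γ j := disjoint_right.mp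
    (hdisj _ (by simp [hs.one_le]; omega) _ (by simp) (by omega) hs.apply_self.ge) (by simp [hc])
  refine ⟨mergeColoring (m + 1) n (extendColoring γ), c, isProper_mergeColoring hs hγ,
    by simp [mergeColoring_top, hc], by rwa [mergeColoring_of_ne (by omega)],
    by rw [splitColoring_mergeColoring hmn.ne hc hcn]⟩

lemma csf_eq_sum_splitColoring (hs : BlowupShape n m j h) :
    csf n (Icc 1 (m + 1)) h N =
      ∑ η ∈ univ.filter (IsProper n (Icc 1 m) (Function.update h j m)),
        ∑ c ∈ extendColoring η n \ extendColoring η j,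
          C (∏ v, ∏ a ∈ η v, MvPolynomial.X a) *
            X ^ (asc n (Icc 1 m) (Function.update h j m) η +
              (numAsc (extendColoring η j) {c} + numAsc {c} (extendColoring η n))) := by
  rw [csf, sum_sigma']
  symm
  refine sum_bij (fun p _ => restrictColoring _ (splitColoring (m + 1) n (extendColoring p.1) p.2))
    ?_ ?_ ?_ ?_
  · rintro ⟨η, c⟩ hp
    simp only [mem_sigma, mem_filter, mem_univ, true_and, mem_sdiff] at hp ⊢
    exact isProper_splitColoring hs (by rw [restrictColoring_extendColoring]; exact hp.1)
      hp.2.1 hp.2.2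
  · rintro ⟨η, c⟩ hp ⟨η', c'⟩ hp' heq
    simp only [mem_sigma, mem_sdiff] at hp hp'
    obtain ⟨rfl, hηη'⟩ :=
      eq_of_restrictColoring_splitColoring_eq hs.succ_lt hp.2.1 hp'.2.1 heq
    simp only [restrictColoring_extendColoring] at hηη'
    rw [hηη']
  · intro γ hγ
    obtain ⟨F, c, hF, hcn, hcj, rfl⟩ := exists_splitColoring hs (mem_filter.mp hγ).2
    have hFV : ∀ x ∈ verts n (Icc 1 m), extendColoring (restrictColoring _ F) x = F x :=
      fun x hx => extendColoring_restrictColoring F hx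
    refine ⟨⟨restrictColoring _ F, c⟩, ?_, restrictColoring_splitColoring_congr hFV⟩
    simp [hF, hFV n (by simp), hFV j (by simp [hs.one_le, hs.le]), hcn, hcj]
  · rintro ⟨η, c⟩ hp
    simp only [mem_sigma, mem_sdiff] at hp
    rw [prod_restrictColoring, prod_splitColoring _ hs.succ_lt hp.2.1,
      ← prod_restrictColoring, restrictColoring_extendColoring, asc_splitColoring hs hp.2.1,
      restrictColoring_extendColoring]

lemma sum_pow_splitColoring (hs : BlowupShape n m j h)
    {η : {x // x ∈ verts n (Icc 1 m)} → Finset (Fin N)}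
    (hη : IsProper n (Icc 1 m) (Function.update h j m) η) :
    ∑ c ∈ extendColoring η n \ extendColoring η j,
        (X : (MvPolynomial (Fin N) ℤ)[X]) ^
          (numAsc (extendColoring η j) {c} + numAsc {c} (extendColoring η n)) =
      X * qNum _ (n - (m + 1)) +
        if Disjoint (extendColoring η j) (extendColoring η n) then
          X ^ numAsc (extendColoring η j) (extendColoring η n)
        else 0 := by
  have hmn := hs.succ_lt
  rw [← restrictColoring_extendColoring η, isProper_restrictColoring_iff] at hη
  obtain ⟨b, hb⟩ : ∃ b, extendColoring η j = {b} :=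
    card_eq_one.mp ((hη.1 j (by simp [hs.one_le, hs.le])).trans
      (wt_Icc_of_le (by omega) hs.one_le hs.le))
  have hn : #(extendColoring η n) = (n - (m + 1)) + 1 := by
    rw [hη.1 n (by simp), wt_Icc_top (by omega)]
    omega
  rw [hb, sum_pow_numAsc_sdiff_singleton _ b hn]

theorem csf_eq_of_blowupShape (hs : BlowupShape n m j h) :
    csf n (Icc 1 (m + 1)) h N =
      csf n (Icc 1 m) (Function.update h j n) N +
        X * qNum (MvPolynomial (Fin N) ℤ) (n - (m + 1)) *
          csf n (Icc 1 m) (Function.update h j m) N := by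
  rw [csf_eq_sum_splitColoring hs, csf_update_top hs.one_le hs.le (by have := hs.succ_lt; omega),
    csf, mul_sum, ← sum_add_distrib]
  refine sum_congr rfl fun η hη => ?_
  simp only [pow_add X (asc n (Icc 1 m) (Function.update h j m) η), ← mul_assoc]
  rw [← mul_sum, sum_pow_splitColoring hs (mem_filter.mp hη).2]
  split_ifs <;> ring

end SplitColoring

end GenHess

open GenHess

theorem csf_blowup_last_general (n r : ℕ) (h : ℕ → ℕ) (hgen : IsGenHess n (Finset.Icc 1 r) h)
    (hrn : r < n) (htop : h r = n)
    (j : ℕ) (hj : j ∈ Finset.Icc 1 r) (hjv : h j = r)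
    (huniq : ∀ i ∈ Finset.Icc 1 r, h i = r → i = j)
    (N : ℕ) :
    csf n (Finset.Icc 1 r) h N =
      csf n (Finset.Icc 1 (r - 1)) (Function.update h j n) N +
      Polynomial.X * qNum (MvPolynomial (Fin N) ℤ) (n - r) *
        csf n (Finset.Icc 1 (r - 1)) (Function.update h j (r - 1)) N := by
  obtain ⟨m, rfl⟩ : ∃ m, r = m + 1 := ⟨r - 1, by simp at hj; omega⟩
  simpa using csf_eq_of_blowupShape (N := N) (hgen.blowupShape hrn htop hj hjv huniq)

/-- Corollary 48(2), eq. (74): if `h r = n` and exactly one `j` has `h j = r`, then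
`csf(h) = csf(g') + q [n-r]_q csf(g'')` with `g' j = n`, `g'' j = r - 1` on `[r-1]`. -/
theorem csf_blowup_last (n r : ℕ) (h : ℕ → ℕ) (hgen : IsGenHess n (Finset.Icc 1 r) h)
    (hr : 1 ≤ r) (hrn : r < n) (htop : h r = n)
    (j : ℕ) (hj : j ∈ Finset.Icc 1 r) (hjv : h j = r)
    (huniq : ∀ i ∈ Finset.Icc 1 r, h i = r → i = j)
    (N : ℕ) (hN : 1 ≤ N) :
    csf n (Finset.Icc 1 r) h N =
      csf n (Finset.Icc 1 (r - 1)) (Function.update h j n) N +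
      Polynomial.X * qNum (MvPolynomial (Fin N) ℤ) (n - r) *
        csf n (Finset.Icc 1 (r - 1)) (Function.update h j (r - 1)) N :=
  csf_blowup_last_general n r h hgen hrn htop j hj hjv huniq N
end

section
/- [Modular law, first case] Let h ∈ H_n and 1 ≤ j < n. Suppose h(j) = h(j+1) and there is exactly one j_0 ∈ [n] with h(j_0) = j. Define h^+, h^− ∈ H_n by: h^+(i) = h(i) for i ≠ j_0 and h^+(j_0) = j+1; h^−(i) = h(i) for i ≠ j_0 and h^−(j_0) = j−1. Then for every N ≥ 1, (1+q) · csf_q^N(h) = csf_q^N(h^+) + q · csf_q^N(h^−). (This is Proposition 64(1), eq. (69), expressed via chromatic quasisymmetric functions using the paper's Shareshian–Wachs theorem.) -/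
namespace GenHess
open scoped Classical
noncomputable section


def pc {N : ℕ} (S T : Finset (Fin N)) : ℕ :=
  ((S ×ˢ T).filter fun ab => ab.1 < ab.2).card

lemma pc_singleton {N : ℕ} (x y : Fin N) :
    pc {x} {y} = if (x:ℕ) < (y:ℕ) then 1 else 0 := by
  unfold pc
  rw [Finset.singleton_product_singleton, Finset.filter_singleton]
  by_cases hxy : (x:ℕ) < (y:ℕ)
  · rw [if_pos hxy, if_pos (show ((x,y).1 : Fin N) < (x,y).2 from hxy), Finset.card_singleton]
  · rw [if_neg hxy, if_neg (show ¬((x,y).1 : Fin N) < (x,y).2 from hxy), Finset.card_empty]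

lemma disj_singleton {N : ℕ} (x y : Fin N) :
    Disjoint ({x} : Finset (Fin N)) {y} ↔ ¬ ((x:ℕ) = (y:ℕ)) := by
  simp [Fin.ext_iff, eq_comm]

lemma if_or_split {P Q R : Prop} [Decidable P] [Decidable Q] [Decidable R]
    (h : P ↔ Q ∨ R) (hQR : ¬(Q ∧ R)) (x y : ℕ) (hxy : R → x = y) :
    (if P then x else 0) = (if Q then x else 0) + (if R then y else 0) := by
  by_cases hR : R
  · have hQ : ¬Q := fun hq => hQR ⟨hq, hR⟩
    simp [h.mpr (Or.inr hR), hQ, hR, hxy hR]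
  · by_cases hQ : Q
    · simp [h.mpr (Or.inl hQ), hQ, hR]
    · have hP : ¬P := fun hp => (h.mp hp).elim hQ hR
      simp [hP, hQ, hR]

set_option maxHeartbeats 1000000 in
lemma key_alg {R : Type*} [CommRing R] (q Φ : R) (B B2 : ℕ) (c a b : ℕ) (hab : ¬ a = b)
    (hB : B2 + (if a < b then 1 else 0) = B + (if b < a then 1 else 0)) :
    (1+q) * (if ¬ c = a then Φ * q^(B + (if c < a then 1 else 0)) else 0)
      + (1+q) * (if ¬ c = b then Φ * q^(B2 + (if c < b then 1 else 0)) else 0)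
    = ((if ¬ c = a ∧ ¬ c = b then Φ * q^(B + (if c < a then 1 else 0) + (if c < b then 1 else 0)) else 0)
        + q * (Φ * q^B))
      + ((if ¬ c = b ∧ ¬ c = a then Φ * q^(B2 + (if c < b then 1 else 0) + (if c < a then 1 else 0)) else 0)
        + q * (Φ * q^B2)) := by
  split_ifs at hB ⊢ <;>
    first
    | (exfalso; omega)
    | (have hBB : B = B2 + 1 := by omega
       subst hBB; ring)
    | (have hBB : B2 = B + 1 := by omega
       subst hBB; ring)

lemma verts_eq (n : ℕ) (hn : 1 ≤ n) : verts n (Finset.Icc 1 (n-1)) = Finset.Icc 1 n := by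
  unfold verts
  ext x
  simp only [Finset.mem_insert, Finset.mem_Icc]
  omega

lemma wt_eq_one (n : ℕ) (hn : 1 ≤ n) (v : ℕ) (hv : v ∈ verts n (Finset.Icc 1 (n-1))) :
    wt n (Finset.Icc 1 (n-1)) v = 1 := by
  unfold wt
  rw [verts_eq n hn] at hv ⊢
  rw [Finset.mem_Icc] at hv
  have hsup : ((Finset.Icc 1 n).filter (fun u => u < v)).sup id = v - 1 := by
    apply le_antisymm
    · apply Finset.sup_le
      intro u hu
      rw [Finset.mem_filter, Finset.mem_Icc] at hu
      simp only [id]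
      omega
    · rcases Nat.eq_or_lt_of_le hv.1 with h1 | h1
      · simp [← h1]
      · have hmem : v - 1 ∈ (Finset.Icc 1 n).filter (fun u => u < v) := by
          rw [Finset.mem_filter, Finset.mem_Icc]
          omega
        exact Finset.le_sup (f := id) hmem
  rw [hsup]
  omega

lemma sum_ind {α : Type*} [Fintype α] [DecidableEq α] (w w' : α) (c : ℕ) :
    (∑ v : α, ∑ u : α, if v = w ∧ u = w' then c else 0) = c := by
  have h1 : ∀ v : α, (∑ u : α, if v = w ∧ u = w' then c else 0)
      = if v = w then c else 0 := by
    intro v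
    by_cases hv : v = w
    · simp [hv]
    · simp [hv]
  simp only [h1]
  simp

lemma asc_eq {N : ℕ} (n : ℕ) (I : Finset ℕ) (f : ℕ → ℕ)
    (γ : {x // x ∈ verts n I} → Finset (Fin N)) :
    asc n I f γ = ∑ v : {x // x ∈ verts n I}, ∑ u : {x // x ∈ verts n I},
      if v.val < u.val ∧ u.val ≤ f v.val then pc (γ v) (γ u) else 0 := rfl

lemma asc_split {N : ℕ} (n : ℕ) (I : Finset ℕ) (f g : ℕ → ℕ)
    (w0 w : {x // x ∈ verts n I})
    (hiff : ∀ v u : {x // x ∈ verts n I},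
      (v.val < u.val ∧ u.val ≤ f v.val) ↔ ((v.val < u.val ∧ u.val ≤ g v.val) ∨ (v = w0 ∧ u = w)))
    (hng : ¬(w0.val < w.val ∧ w.val ≤ g w0.val))
    (γ : {x // x ∈ verts n I} → Finset (Fin N)) :
    asc n I f γ = asc n I g γ + pc (γ w0) (γ w) := by
  rw [asc_eq, asc_eq]
  have step : ∀ v u : {x // x ∈ verts n I},
      (if v.val < u.val ∧ u.val ≤ f v.val then pc (γ v) (γ u) else 0)
      = (if v.val < u.val ∧ u.val ≤ g v.val then pc (γ v) (γ u) else 0)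
        + (if v = w0 ∧ u = w then pc (γ w0) (γ w) else 0) := by
    intro v u
    refine if_or_split (hiff v u) ?_ _ _ ?_
    · rintro ⟨hQ, rfl, rfl⟩
      exact hng hQ
    · rintro ⟨rfl, rfl⟩
      rfl
  calc (∑ v : {x // x ∈ verts n I}, ∑ u : {x // x ∈ verts n I},
        if v.val < u.val ∧ u.val ≤ f v.val then pc (γ v) (γ u) else 0)
      = ∑ v : {x // x ∈ verts n I}, ∑ u : {x // x ∈ verts n I},
          ((if v.val < u.val ∧ u.val ≤ g v.val then pc (γ v) (γ u) else 0)
            + (if v = w0 ∧ u = w then pc (γ w0) (γ w) else 0)) := by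
        exact Finset.sum_congr rfl fun v _ => Finset.sum_congr rfl fun u _ => step v u
    _ = (∑ v : {x // x ∈ verts n I}, ∑ u : {x // x ∈ verts n I},
          if v.val < u.val ∧ u.val ≤ g v.val then pc (γ v) (γ u) else 0)
        + ∑ v : {x // x ∈ verts n I}, ∑ u : {x // x ∈ verts n I},
            (if v = w0 ∧ u = w then pc (γ w0) (γ w) else 0) := by
        rw [← Finset.sum_add_distrib]
        exact Finset.sum_congr rfl fun v _ => Finset.sum_add_distrib
    _ = _ := by rw [sum_ind]

lemma proper_split {N : ℕ} (n : ℕ) (I : Finset ℕ) (f g : ℕ → ℕ)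
    (w0 w : {x // x ∈ verts n I})
    (hiff : ∀ v u : {x // x ∈ verts n I},
      (v.val < u.val ∧ u.val ≤ f v.val) ↔ ((v.val < u.val ∧ u.val ≤ g v.val) ∨ (v = w0 ∧ u = w)))
    (hlt : w0.val < w.val)
    (γ : {x // x ∈ verts n I} → Finset (Fin N)) :
    IsProper n I f γ ↔ IsProper n I g γ ∧ Disjoint (γ w0) (γ w) := by
  constructor
  · rintro ⟨hcard, hdisj⟩
    refine ⟨⟨hcard, fun v u h1 h2 => hdisj v u h1 ?_⟩, hdisj w0 w hlt ?_⟩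
    · exact ((hiff v u).mpr (Or.inl ⟨h1, h2⟩)).2
    · exact ((hiff w0 w).mpr (Or.inr ⟨rfl, rfl⟩)).2
  · rintro ⟨⟨hcard, hdisj⟩, hd⟩
    refine ⟨hcard, fun v u h1 h2 => ?_⟩
    rcases (hiff v u).mp ⟨h1, h2⟩ with ⟨_, h3⟩ | ⟨rfl, rfl⟩
    · exact hdisj v u h1 h3
    · exact hd

lemma csf_eq_sum {N : ℕ} (n : ℕ) (I : Finset ℕ) (f g : ℕ → ℕ)
    (P : ({x // x ∈ verts n I} → Finset (Fin N)) → Prop)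
    (hiff : ∀ γ, IsProper n I f γ ↔ IsProper n I g γ ∧ P γ) :
    csf n I f N = ∑ γ ∈ Finset.univ.filter
        (fun γ : {x // x ∈ verts n I} → Finset (Fin N) => IsProper n I g γ),
      if P γ then Polynomial.C (∏ v : {x // x ∈ verts n I}, ∏ a ∈ γ v, MvPolynomial.X a)
          * Polynomial.X ^ asc n I f γ else 0 := by
  unfold csf
  have hset : Finset.univ.filter
        (fun γ : {x // x ∈ verts n I} → Finset (Fin N) => IsProper n I f γ)
      = (Finset.univ.filter
          (fun γ : {x // x ∈ verts n I} → Finset (Fin N) => IsProper n I g γ)).filter P := by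
    ext γ
    simp [Finset.mem_filter, hiff γ, and_assoc]
  rw [hset, Finset.sum_filter]


end
end GenHess

open GenHess

set_option maxHeartbeats 1600000

/-- Proposition 64(1), eq. (69), the modular law (first case):
`(1+q) csf(h) = csf(h⁺) + q csf(h⁻)` where `h⁺ j₀ = j+1`, `h⁻ j₀ = j-1`. -/
theorem csf_modular_law_one (n : ℕ) (h : ℕ → ℕ)
    (hgen : IsGenHess n (Finset.Icc 1 (n - 1)) h)
    (j : ℕ) (hj1 : 1 ≤ j) (hjn : j < n)
    (hval : h j = h (j + 1))
    (j0 : ℕ) (hj0 : j0 ∈ Finset.Icc 1 n) (hj0v : h j0 = j)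
    (huniq : ∀ i ∈ Finset.Icc 1 n, h i = j → i = j0)
    (N : ℕ) (hN : 1 ≤ N) :
    (1 + Polynomial.X) * csf n (Finset.Icc 1 (n - 1)) h N =
      csf n (Finset.Icc 1 (n - 1)) (Function.update h j0 (j + 1)) N +
      Polynomial.X * csf n (Finset.Icc 1 (n - 1)) (Function.update h j0 (j - 1)) N := by
  classical
  obtain ⟨hIb, hmaps, hge, hmono⟩ := hgen
  set I : Finset ℕ := Finset.Icc 1 (n-1) with hI
  set hp : ℕ → ℕ := Function.update h j0 (j + 1) with hhp
  set hm : ℕ → ℕ := Function.update h j0 (j - 1) with hhm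
  have hn : 1 ≤ n := by omega
  have hmemj : j ∈ verts n I := by rw [verts_eq n hn]; rw [Finset.mem_Icc]; omega
  have hmemj1 : j + 1 ∈ verts n I := by rw [verts_eq n hn]; rw [Finset.mem_Icc]; omega
  have hmemj0 : j0 ∈ verts n I := by rw [verts_eq n hn]; exact hj0
  obtain ⟨vj, hvjval⟩ : ∃ v : {x // x ∈ verts n I}, v.val = j := ⟨⟨j, hmemj⟩, rfl⟩
  obtain ⟨vj1, hvj1val⟩ : ∃ v : {x // x ∈ verts n I}, v.val = j + 1 := ⟨⟨j+1, hmemj1⟩, rfl⟩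
  obtain ⟨v0, hv0val⟩ : ∃ v : {x // x ∈ verts n I}, v.val = j0 := ⟨⟨j0, hmemj0⟩, rfl⟩
  have hj00 : 1 ≤ j0 ∧ j0 ≤ n := Finset.mem_Icc.mp hj0
  have hgej1 : j + 1 ≤ h (j+1) := hge _ hmemj1
  have hHge : j + 1 ≤ h j := by rw [hval]; exact hgej1
  have hj0j : j0 < j := by
    have h1 : j0 ≤ h j0 := hge _ hmemj0
    rw [hj0v] at h1
    rcases Nat.lt_or_ge j0 j with h2 | h2
    · exact h2
    · exfalso
      have h3 : j0 = j := le_antisymm h1 h2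
      rw [h3] at hj0v
      omega
  have hpj0 : hp j0 = j + 1 := by rw [hhp]; simp
  have hmj0 : hm j0 = j - 1 := by rw [hhm]; simp
  have hpne : ∀ x, x ≠ j0 → hp x = h x := fun x hx => by
    rw [hhp, Function.update_of_ne hx]
  have hmne : ∀ x, x ≠ j0 → hm x = h x := fun x hx => by
    rw [hhm, Function.update_of_ne hx]
  have hmj : hm j = h j := hmne j (by omega)
  have hmj1 : hm (j+1) = h (j+1) := hmne _ (by omega)
  have hm_eq : hm j = hm (j+1) := by rw [hmj, hmj1, hval]
  have hm_ge : j + 1 ≤ hm j := by rw [hmj]; exact hHge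
  have hm_ne_j : ∀ w : {x // x ∈ verts n I}, hm w.val ≠ j := by
    intro w
    by_cases hw : w.val = j0
    · rw [hw, hmj0]; omega
    · rw [hmne _ hw]
      intro hcon
      have hmem : (w : ℕ) ∈ Finset.Icc 1 n := by
        rw [← verts_eq n hn]
        exact w.2
      exact hw (huniq _ hmem hcon)
  -- edge characterizations
  have hiff_m : ∀ v u : {x // x ∈ verts n I},
      (v.val < u.val ∧ u.val ≤ h v.val) ↔
        ((v.val < u.val ∧ u.val ≤ hm v.val) ∨ (v = v0 ∧ u = vj)) := by
    intro v u
    by_cases hv : v.val = j0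
    · have h1 : h v.val = j := by rw [hv, hj0v]
      have h2 : hm v.val = j - 1 := by rw [hv, hmj0]
      rw [h1, h2]
      constructor
      · rintro ⟨hlt, hle⟩
        by_cases hu : u.val = j
        · exact Or.inr ⟨Subtype.ext (hv.trans hv0val.symm), Subtype.ext (hu.trans hvjval.symm)⟩
        · exact Or.inl ⟨hlt, by omega⟩
      · rintro (⟨hlt, hle⟩ | ⟨hveq, hueq⟩)
        · exact ⟨hlt, by omega⟩
        · have h3 : u.val = j := by rw [hueq, hvjval]
          exact ⟨by omega, by omega⟩
    · have h2 : hm v.val = h v.val := hmne _ hv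
      have h3 : ¬ v = v0 := fun he => hv (by rw [he, hv0val])
      rw [h2]
      simp [h3]
  have hiff_p : ∀ v u : {x // x ∈ verts n I},
      (v.val < u.val ∧ u.val ≤ hp v.val) ↔
        ((v.val < u.val ∧ u.val ≤ h v.val) ∨ (v = v0 ∧ u = vj1)) := by
    intro v u
    by_cases hv : v.val = j0
    · have h1 : hp v.val = j + 1 := by rw [hv, hpj0]
      have h2 : h v.val = j := by rw [hv, hj0v]
      rw [h1, h2]
      constructor
      · rintro ⟨hlt, hle⟩
        by_cases hu : u.val = j + 1
        · exact Or.inr ⟨Subtype.ext (hv.trans hv0val.symm), Subtype.ext (hu.trans hvj1val.symm)⟩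
        · exact Or.inl ⟨hlt, by omega⟩
      · rintro (⟨hlt, hle⟩ | ⟨hveq, hueq⟩)
        · exact ⟨hlt, by omega⟩
        · have h3 : u.val = j + 1 := by rw [hueq, hvj1val]
          exact ⟨by omega, by omega⟩
    · have h2 : hp v.val = h v.val := hpne _ hv
      have h3 : ¬ v = v0 := fun he => hv (by rw [he, hv0val])
      rw [h2]
      simp [h3]
  -- properness characterizations
  have hiff1 : ∀ γ : {x // x ∈ verts n I} → Finset (Fin N),
      IsProper n I h γ ↔ IsProper n I hm γ ∧ Disjoint (γ v0) (γ vj) :=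
    fun γ => proper_split n I h hm v0 vj hiff_m (by rw [hv0val, hvjval]; exact hj0j) γ
  have hiffp : ∀ γ : {x // x ∈ verts n I} → Finset (Fin N),
      IsProper n I hp γ ↔ IsProper n I h γ ∧ Disjoint (γ v0) (γ vj1) :=
    fun γ => proper_split n I hp h v0 vj1 hiff_p (by rw [hv0val, hvj1val]; omega) γ
  have hiff2 : ∀ γ : {x // x ∈ verts n I} → Finset (Fin N),
      IsProper n I hp γ ↔ IsProper n I hm γ ∧
        (Disjoint (γ v0) (γ vj) ∧ Disjoint (γ v0) (γ vj1)) := by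
    intro γ
    rw [hiffp γ, hiff1 γ, and_assoc]
  have hiff0 : ∀ γ : {x // x ∈ verts n I} → Finset (Fin N),
      IsProper n I hm γ ↔ IsProper n I hm γ ∧ True :=
    fun γ => (and_iff_left trivial).symm
  -- asc splittings
  have hascm : ∀ γ : {x // x ∈ verts n I} → Finset (Fin N),
      asc n I h γ = asc n I hm γ + pc (γ v0) (γ vj) :=
    asc_split n I h hm v0 vj hiff_m (by rw [hv0val, hvjval, hmj0]; omega)
  have hascp : ∀ γ : {x // x ∈ verts n I} → Finset (Fin N),
      asc n I hp γ = asc n I h γ + pc (γ v0) (γ vj1) :=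
    asc_split n I hp h v0 vj1 hiff_p (by rw [hv0val, hvj1val, hj0v]; omega)
  -- the swap
  have hne_jj1 : vj ≠ vj1 := by
    intro he
    have := congrArg Subtype.val he
    rw [hvjval, hvj1val] at this
    omega
  have hv0j : v0 ≠ vj := by
    intro he
    have := congrArg Subtype.val he
    rw [hv0val, hvjval] at this
    omega
  have hv0j1 : v0 ≠ vj1 := by
    intro he
    have := congrArg Subtype.val he
    rw [hv0val, hvj1val] at this
    omega
  set s : Equiv.Perm {x // x ∈ verts n I} := Equiv.swap vj vj1 with hsdef
  have hsvj : s vj = vj1 := Equiv.swap_apply_left _ _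
  have hsvj1 : s vj1 = vj := Equiv.swap_apply_right _ _
  have hsv0 : s v0 = v0 := Equiv.swap_apply_of_ne_of_ne hv0j hv0j1
  have hss : ∀ v, s (s v) = v := fun v => Equiv.swap_apply_self _ _ _
  have hedge_jj1 : vj.val < vj1.val ∧ vj1.val ≤ hm vj.val := by
    rw [hvjval, hvj1val]
    exact ⟨by omega, hm_ge⟩
  have hiff_s : ∀ v u : {x // x ∈ verts n I}, ¬(v = vj ∧ u = vj1) → ¬(v = vj1 ∧ u = vj) →
      (((s v).val < (s u).val ∧ (s u).val ≤ hm (s v).val) ↔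
        (v.val < u.val ∧ u.val ≤ hm v.val)) := by
    intro v u hx1 hx2
    by_cases hv1 : v = vj
    · by_cases hu1 : u = vj
      · rw [hv1, hu1, hsvj, hvjval, hvj1val]
        constructor <;> (rintro ⟨hcon, -⟩; omega)
      · by_cases hu2 : u = vj1
        · exact absurd ⟨hv1, hu2⟩ hx1
        · have hsu : s u = u := Equiv.swap_apply_of_ne_of_ne hu1 hu2
          have h1 : u.val ≠ j := fun he => hu1 (Subtype.ext (he.trans hvjval.symm))
          have h2 : u.val ≠ j + 1 := fun he => hu2 (Subtype.ext (he.trans hvj1val.symm))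
          rw [hv1, hsvj, hsu, hvjval, hvj1val, ← hm_eq]
          omega
    · by_cases hv2 : v = vj1
      · by_cases hu1 : u = vj
        · exact absurd ⟨hv2, hu1⟩ hx2
        · by_cases hu2 : u = vj1
          · rw [hv2, hu2, hsvj1, hvjval, hvj1val]
            constructor <;> (rintro ⟨hcon, -⟩; omega)
          · have hsu : s u = u := Equiv.swap_apply_of_ne_of_ne hu1 hu2
            have h1 : u.val ≠ j := fun he => hu1 (Subtype.ext (he.trans hvjval.symm))
            have h2 : u.val ≠ j + 1 := fun he => hu2 (Subtype.ext (he.trans hvj1val.symm))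
            rw [hv2, hsvj1, hsu, hvjval, hvj1val, hm_eq]
            omega
      · have hsv : s v = v := Equiv.swap_apply_of_ne_of_ne hv1 hv2
        have hv1' : v.val ≠ j := fun he => hv1 (Subtype.ext (he.trans hvjval.symm))
        have hv2' : v.val ≠ j + 1 := fun he => hv2 (Subtype.ext (he.trans hvj1val.symm))
        have hvm := hm_ne_j v
        rw [hsv]
        by_cases hu1 : u = vj
        · rw [hu1, hsvj, hvjval, hvj1val]
          omega
        · by_cases hu2 : u = vj1
          · rw [hu2, hsvj1, hvjval, hvj1val]
            omega
          · rw [Equiv.swap_apply_of_ne_of_ne hu1 hu2]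
  -- asc is invariant under the swap up to the (j, j+1)-edge term
  have asc_swap : ∀ γ : {x // x ∈ verts n I} → Finset (Fin N),
      asc n I hm (γ ∘ s) + pc (γ vj) (γ vj1) = asc n I hm γ + pc (γ vj1) (γ vj) := by
    intro γ
    rw [asc_eq, asc_eq]
    have hreidx : (∑ v : {x // x ∈ verts n I}, ∑ u : {x // x ∈ verts n I},
          if v.val < u.val ∧ u.val ≤ hm v.val then pc ((γ ∘ s) v) ((γ ∘ s) u) else 0)
        = ∑ v : {x // x ∈ verts n I}, ∑ u : {x // x ∈ verts n I},
            if (s v).val < (s u).val ∧ (s u).val ≤ hm (s v).val then pc (γ v) (γ u) else 0 := by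
      refine (Fintype.sum_equiv s _ _ (fun v => ?_)).symm
      refine Fintype.sum_equiv s _ _ (fun u => ?_)
      simp only [Function.comp_apply, hss]
    rw [hreidx]
    have hL : (∑ v : {x // x ∈ verts n I}, ∑ u : {x // x ∈ verts n I},
            ((if (s v).val < (s u).val ∧ (s u).val ≤ hm (s v).val then pc (γ v) (γ u) else 0)
              + (if v = vj ∧ u = vj1 then pc (γ vj) (γ vj1) else 0)))
        = (∑ v : {x // x ∈ verts n I}, ∑ u : {x // x ∈ verts n I},
          if (s v).val < (s u).val ∧ (s u).val ≤ hm (s v).val then pc (γ v) (γ u) else 0)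
          + pc (γ vj) (γ vj1) := by
      have hsplit : (∑ v : {x // x ∈ verts n I}, ∑ u : {x // x ∈ verts n I},
            ((if (s v).val < (s u).val ∧ (s u).val ≤ hm (s v).val then pc (γ v) (γ u) else 0)
              + (if v = vj ∧ u = vj1 then pc (γ vj) (γ vj1) else 0)))
          = (∑ v : {x // x ∈ verts n I}, ∑ u : {x // x ∈ verts n I},
              if (s v).val < (s u).val ∧ (s u).val ≤ hm (s v).val then pc (γ v) (γ u) else 0)
            + ∑ v : {x // x ∈ verts n I}, ∑ u : {x // x ∈ verts n I},
                (if v = vj ∧ u = vj1 then pc (γ vj) (γ vj1) else 0) := by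
        rw [← Finset.sum_add_distrib]
        exact Finset.sum_congr rfl fun v _ => Finset.sum_add_distrib
      rw [hsplit, sum_ind]
    have hR : (∑ v : {x // x ∈ verts n I}, ∑ u : {x // x ∈ verts n I},
            ((if v.val < u.val ∧ u.val ≤ hm v.val then pc (γ v) (γ u) else 0)
              + (if v = vj1 ∧ u = vj then pc (γ vj1) (γ vj) else 0)))
        = (∑ v : {x // x ∈ verts n I}, ∑ u : {x // x ∈ verts n I},
          if v.val < u.val ∧ u.val ≤ hm v.val then pc (γ v) (γ u) else 0)
          + pc (γ vj1) (γ vj) := by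
      have hsplit : (∑ v : {x // x ∈ verts n I}, ∑ u : {x // x ∈ verts n I},
            ((if v.val < u.val ∧ u.val ≤ hm v.val then pc (γ v) (γ u) else 0)
              + (if v = vj1 ∧ u = vj then pc (γ vj1) (γ vj) else 0)))
          = (∑ v : {x // x ∈ verts n I}, ∑ u : {x // x ∈ verts n I},
              if v.val < u.val ∧ u.val ≤ hm v.val then pc (γ v) (γ u) else 0)
            + ∑ v : {x // x ∈ verts n I}, ∑ u : {x // x ∈ verts n I},
                (if v = vj1 ∧ u = vj then pc (γ vj1) (γ vj) else 0) := by
        rw [← Finset.sum_add_distrib]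
        exact Finset.sum_congr rfl fun v _ => Finset.sum_add_distrib
      rw [hsplit, sum_ind]
    rw [← hL, ← hR]
    refine Finset.sum_congr rfl fun v _ => Finset.sum_congr rfl fun u _ => ?_
    by_cases hc1 : v = vj ∧ u = vj1
    · obtain ⟨hcv, hcu⟩ := hc1
      rw [hcv, hcu]
      have hE1 : ¬((s vj).val < (s vj1).val ∧ (s vj1).val ≤ hm (s vj).val) := by
        rw [hsvj, hsvj1, hvjval, hvj1val]
        omega
      rw [if_neg hE1, if_pos ⟨rfl, rfl⟩, if_pos hedge_jj1,
        if_neg (fun hc => hne_jj1 hc.1)]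
      omega
    · by_cases hc2 : v = vj1 ∧ u = vj
      · obtain ⟨hcv, hcu⟩ := hc2
        rw [hcv, hcu]
        have hE1 : (s vj1).val < (s vj).val ∧ (s vj).val ≤ hm (s vj1).val := by
          rw [hsvj, hsvj1]
          exact hedge_jj1
        have hE2 : ¬(vj1.val < vj.val ∧ vj.val ≤ hm vj1.val) := by
          rw [hvjval, hvj1val]
          omega
        rw [if_pos hE1, if_neg (fun hc => hne_jj1 hc.1.symm), if_neg hE2, if_pos ⟨rfl, rfl⟩]
        omega
      · rw [if_neg hc1, if_neg hc2]
        have := hiff_s v u hc1 hc2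
        by_cases hE : v.val < u.val ∧ u.val ≤ hm v.val
        · rw [if_pos hE, if_pos (this.mpr hE)]
        · rw [if_neg hE, if_neg (fun hcon => hE (this.mp hcon))]
  have wt1 : ∀ v : {x // x ∈ verts n I}, wt n I v.val = 1 := fun v => wt_eq_one n hn _ v.2
  -- the swap preserves properness
  have proper_swap : ∀ γ : {x // x ∈ verts n I} → Finset (Fin N),
      IsProper n I hm γ → IsProper n I hm (γ ∘ s) := by
    intro γ hpr
    obtain ⟨hcard, hdis⟩ := hpr
    constructor
    · intro v
      show (γ (s v)).card = wt n I v.val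
      rw [hcard (s v), wt1, wt1]
    · intro v u h1 h2
      show Disjoint (γ (s v)) (γ (s u))
      by_cases hc1 : v = vj ∧ u = vj1
      · obtain ⟨hcv, hcu⟩ := hc1
        rw [hcv, hcu, hsvj, hsvj1]
        exact (hdis vj vj1 hedge_jj1.1 hedge_jj1.2).symm
      · by_cases hc2 : v = vj1 ∧ u = vj
        · obtain ⟨hcv, hcu⟩ := hc2
          rw [hcv, hcu, hvjval, hvj1val] at h1
          omega
        · have hE := (hiff_s v u hc1 hc2).mpr ⟨h1, h2⟩
          exact hdis (s v) (s u) hE.1 hE.2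
  -- sums over proper colorings are invariant under reindexing by the swap
  set S : Finset ({x // x ∈ verts n I} → Finset (Fin N)) :=
    Finset.univ.filter (fun γ => IsProper n I hm γ) with hS
  have hswap_mem : ∀ γ ∈ S, γ ∘ s ∈ S := by
    intro γ hγ
    rw [hS, Finset.mem_filter] at hγ ⊢
    exact ⟨Finset.mem_univ _, proper_swap γ hγ.2⟩
  have hinv : ∀ γ : {x // x ∈ verts n I} → Finset (Fin N), (γ ∘ s) ∘ s = γ :=
    fun γ => funext fun v => congrArg γ (hss v)
  have hswap_sum : ∀ F : ({x // x ∈ verts n I} → Finset (Fin N)) →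
      Polynomial (MvPolynomial (Fin N) ℤ), (∑ γ ∈ S, F γ) = ∑ γ ∈ S, F (γ ∘ s) :=
    fun F => Finset.sum_nbij' (fun γ => γ ∘ s) (fun γ => γ ∘ s)
      hswap_mem hswap_mem (fun γ _ => hinv γ) (fun γ _ => hinv γ)
      (fun γ _ => (congrArg F (hinv γ)).symm)
  have main : ∀ (F G : ({x // x ∈ verts n I} → Finset (Fin N)) →
      Polynomial (MvPolynomial (Fin N) ℤ)),
      (∀ γ ∈ S, F γ + F (γ ∘ s) = G γ + G (γ ∘ s)) →
        (∑ γ ∈ S, F γ) = ∑ γ ∈ S, G γ := by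
    intro F G hpt
    have h2 : (∑ γ ∈ S, F γ) + (∑ γ ∈ S, F γ) = (∑ γ ∈ S, G γ) + (∑ γ ∈ S, G γ) := by
      nth_rewrite 2 [hswap_sum F]
      nth_rewrite 2 [hswap_sum G]
      rw [← Finset.sum_add_distrib, ← Finset.sum_add_distrib]
      exact Finset.sum_congr rfl hpt
    have h3 : (2 : Polynomial (MvPolynomial (Fin N) ℤ)) * (∑ γ ∈ S, F γ)
        = 2 * ∑ γ ∈ S, G γ := by
      rw [two_mul, two_mul]
      exact h2
    exact mul_left_cancel₀ (by norm_num) h3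
  -- rewrite the three csf's
  rw [csf_eq_sum n I h hm (fun γ => Disjoint (γ v0) (γ vj)) hiff1,
      csf_eq_sum n I hp hm
        (fun γ => Disjoint (γ v0) (γ vj) ∧ Disjoint (γ v0) (γ vj1)) hiff2,
      csf_eq_sum n I hm hm (fun _ => True) hiff0]
  simp only [if_true]
  rw [Finset.mul_sum, Finset.mul_sum, ← Finset.sum_add_distrib]
  refine main _ _ ?_
  intro γ hγ
  rw [hS, Finset.mem_filter] at hγ
  obtain ⟨-, hcard, hdis⟩ := hγ
  obtain ⟨a, ha⟩ := Finset.card_eq_one.mp (by rw [hcard vj]; exact wt1 vj)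
  obtain ⟨b, hb⟩ := Finset.card_eq_one.mp (by rw [hcard vj1]; exact wt1 vj1)
  obtain ⟨c, hc⟩ := Finset.card_eq_one.mp (by rw [hcard v0]; exact wt1 v0)
  have hab : ¬ (a : ℕ) = (b : ℕ) := by
    have hd := hdis vj vj1 hedge_jj1.1 hedge_jj1.2
    rw [ha, hb, disj_singleton] at hd
    exact hd
  have hga : (γ ∘ s) vj = {b} := by
    show γ (s vj) = {b}
    rw [hsvj, hb]
  have hgb : (γ ∘ s) vj1 = {a} := by
    show γ (s vj1) = {a}
    rw [hsvj1, ha]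
  have hgc : (γ ∘ s) v0 = {c} := by
    show γ (s v0) = {c}
    rw [hsv0, hc]
  have hΦ : (∏ v : {x // x ∈ verts n I}, ∏ x ∈ (γ ∘ s) v, MvPolynomial.X (R := ℤ) x)
      = ∏ v : {x // x ∈ verts n I}, ∏ x ∈ γ v, MvPolynomial.X (R := ℤ) x :=
    Equiv.prod_comp s (fun v => ∏ x ∈ γ v, MvPolynomial.X x)
  have e1 : asc n I h γ = asc n I hm γ + (if (c:ℕ) < (a:ℕ) then 1 else 0) := by
    rw [hascm γ, hc, ha, pc_singleton]
  have e2 : asc n I h (γ ∘ s) = asc n I hm (γ ∘ s) + (if (c:ℕ) < (b:ℕ) then 1 else 0) := by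
    rw [hascm (γ ∘ s), hgc, hga, pc_singleton]
  have e3 : asc n I hp γ = asc n I hm γ + (if (c:ℕ) < (a:ℕ) then 1 else 0)
      + (if (c:ℕ) < (b:ℕ) then 1 else 0) := by
    rw [hascp γ, e1, hc, hb, pc_singleton]
  have e4 : asc n I hp (γ ∘ s) = asc n I hm (γ ∘ s) + (if (c:ℕ) < (b:ℕ) then 1 else 0)
      + (if (c:ℕ) < (a:ℕ) then 1 else 0) := by
    rw [hascp (γ ∘ s), e2, hgc, hgb, pc_singleton]
  have hB : asc n I hm (γ ∘ s) + (if (a:ℕ) < (b:ℕ) then 1 else 0)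
      = asc n I hm γ + (if (b:ℕ) < (a:ℕ) then 1 else 0) := by
    have hw := asc_swap γ
    rw [ha, hb, pc_singleton, pc_singleton] at hw
    exact hw
  rw [e1, e2, e3, e4]
  simp only [hgc, hga, hgb, hc, ha, hb, disj_singleton, hΦ]
  exact key_alg Polynomial.X
    (Polynomial.C (∏ v : {x // x ∈ verts n I}, ∏ x ∈ γ v, MvPolynomial.X x))
    (asc n I hm γ) (asc n I hm (γ ∘ s)) c a b hab hB
end

section
/- [Modular law, second case] Let h ∈ H_n and 1 ≤ j < n. Suppose h(j+1) = h(j)+1, h(j) > j, and no i ∈ [n] satisfies h(i) = j. Define h^+, h^− ∈ H_n by: h^+(i) = h(i) for i ≠ j and h^+(j) = h(j)+1; h^−(i) = h(i) for i ≠ j+1 and h^−(j+1) = h(j). Then for every N ≥ 1, (1+q) · csf_q^N(h) = csf_q^N(h^+) + q · csf_q^N(h^−). (This is Proposition 64(2), eq. (70), expressed via chromatic quasisymmetric functions using the paper's Shareshian–Wachs theorem.) -/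
namespace GenHess

open Finset Function Equiv Polynomial
open scoped Classical

def Adj (h : ℕ → ℕ) (v u : ℕ) : Prop := v < u ∧ u ≤ h v

lemma adj_iff_adj_update_or {h : ℕ → ℕ} {k m : ℕ} (hk : h k = m + 1) (hkm : k ≤ m) (v u : ℕ) :
    Adj h v u ↔ Adj (update h k m) v u ∨ (v = k ∧ u = m + 1) := by
  by_cases hv : v = k
  · subst hv
    simp only [Adj, hk, update_self, true_and]
    omega
  · simp [Adj, hv]

lemma adj_swap_iff {g : ℕ → ℕ} {j v u : ℕ} (htwin : g j = g (j + 1)) (hv : g v ≠ j)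
    (hvu : ¬(v = j ∧ u = j + 1)) (huv : ¬(v = j + 1 ∧ u = j)) :
    Adj g (swap j (j + 1) v) (swap j (j + 1) u) ↔ Adj g v u := by
  simp only [Adj, swap_apply_def]
  split_ifs <;> subst_vars <;> omega

def ascCount {α : Type*} [LinearOrder α] (s t : Finset α) : ℕ := #{ab ∈ s ×ˢ t | ab.1 < ab.2}

lemma ascCount_singleton {α : Type*} [LinearOrder α] (x y : α) :
    ascCount {x} {y} = if x < y then 1 else 0 := by
  rw [ascCount, singleton_product_singleton, filter_singleton]
  split_ifs <;> rfl

/-- For a colouring proper for `h⁻` with colour sets `s, t, u` at `j, j+1, h j + 1`, the three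
terms are its contributions to `(1+q) csf(h)`, `csf(h⁺)` and `q csf(h⁻)`, divided by
`q^{asc_{h⁻}}`. -/
def modularWeight {R α : Type*} [CommRing R] [LinearOrder α] (q : R) (s t u : Finset α) : R :=
  (1 + q) * (if Disjoint t u then q ^ ascCount t u else 0)
    - (if Disjoint t u ∧ Disjoint s u then q ^ (ascCount t u + ascCount s u) else 0) - q

lemma mul_modularWeight_add_modularWeight_eq_zero {R α : Type*} [CommRing R] [LinearOrder α]
    (q : R) {x y : α} (hxy : x < y) (z : α) :
    q * modularWeight q {x} {y} {z} + modularWeight q {y} {x} {z} = 0 := by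
  simp only [modularWeight, ascCount_singleton, disjoint_singleton]
  rcases lt_trichotomy z x with hzx | rfl | hxz
  · have hzy := hzx.trans hxy
    simp [hzx.ne', hzy.ne', hzx.not_gt, hzy.not_gt]
  · simp [hxy.ne', hxy.not_gt]
  rcases lt_trichotomy z y with hzy | rfl | hyz
  · simp [hxz, hxz.ne, hzy.ne', hzy.not_gt]
    ring
  · simp [hxz, hxz.ne]
    ring
  · simp [hxz, hxz.ne, hyz, hyz.ne]
    ring

lemma comp_swap_comp_swap {α β : Type*} [DecidableEq α] (γ : α → β) (a b : α) :
    (γ ∘ swap a b) ∘ swap a b = γ :=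
  funext fun v => by simp

section Coloring

variable {n : ℕ} {I : Finset ℕ} {N : ℕ}

local notation "V" => {x // x ∈ verts n I}

lemma asc_eq_sum (h : ℕ → ℕ) (γ : V → Finset (Fin N)) :
    asc n I h γ = ∑ v : V, ∑ u : V, if Adj h v u then ascCount (γ v) (γ u) else 0 :=
  sum_congr rfl fun _ _ => sum_congr rfl fun _ _ => if_congr Iff.rfl rfl rfl

noncomputable def colorMonomial (γ : V → Finset (Fin N)) : MvPolynomial (Fin N) ℤ :=
  ∏ v, ∏ x ∈ γ v, MvPolynomial.X x

variable {h h' : ℕ → ℕ} {a b : {x // x ∈ verts n I}}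

lemma isProper_iff_of_adj_iff (hadj : ∀ v u : V, Adj h' v u ↔ Adj h v u ∨ (v = a ∧ u = b))
    (γ : V → Finset (Fin N)) :
    IsProper n I h' γ ↔ IsProper n I h γ ∧ Disjoint (γ a) (γ b) := by
  constructor
  · rintro ⟨hwt, hdisj⟩
    refine ⟨⟨hwt, fun v u hvu huv => ?_⟩, ?_⟩
    · obtain ⟨hvu', huv'⟩ := (hadj v u).2 (.inl ⟨hvu, huv⟩)
      exact hdisj v u hvu' huv'
    · obtain ⟨hab, hba⟩ := (hadj a b).2 (.inr ⟨rfl, rfl⟩)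
      exact hdisj a b hab hba
  · rintro ⟨⟨hwt, hdisj⟩, hab⟩
    refine ⟨hwt, fun v u hvu huv => ?_⟩
    rcases (hadj v u).1 ⟨hvu, huv⟩ with ⟨hvu', huv'⟩ | ⟨rfl, rfl⟩
    · exact hdisj v u hvu' huv'
    · exact hab

lemma asc_eq_add_of_adj_iff (hadj : ∀ v u : V, Adj h' v u ↔ Adj h v u ∨ (v = a ∧ u = b))
    (hab : ¬ Adj h a b) (γ : V → Finset (Fin N)) :
    asc n I h' γ = asc n I h γ + ascCount (γ a) (γ b) := by
  have hterm : ∀ v u : V, (if Adj h' v u then ascCount (γ v) (γ u) else 0) =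
      (if Adj h v u then ascCount (γ v) (γ u) else 0) +
        if v = a ∧ u = b then ascCount (γ a) (γ b) else 0 := by
    intro v u
    by_cases hvu : v = a ∧ u = b
    · obtain ⟨rfl, rfl⟩ := hvu
      simp [hadj, hab]
    · simp [hadj, hvu]
  simp [asc_eq_sum, hterm, sum_add_distrib, ite_and]

lemma colorMonomial_comp_perm (σ : Equiv.Perm {x // x ∈ verts n I}) (γ : V → Finset (Fin N)) :
    colorMonomial (γ ∘ σ) = colorMonomial γ :=
  Equiv.prod_comp σ fun v => ∏ x ∈ γ v, MvPolynomial.X x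

section Swap

variable (hab : Adj h a b)
  (haut : ∀ v u : {x // x ∈ verts n I}, ¬(v = a ∧ u = b) → ¬(v = b ∧ u = a) →
    (Adj h (swap a b v) (swap a b u) ↔ Adj h v u))
include hab haut

lemma IsProper.comp_swap (hwt : wt n I a = wt n I b) {γ : V → Finset (Fin N)}
    (hγ : IsProper n I h γ) : IsProper n I h (γ ∘ swap a b) := by
  refine ⟨fun v => ?_, fun v u hvu huv => ?_⟩
  · rw [comp_apply, hγ.1, swap_apply_def]
    split_ifs <;> subst_vars <;> simp [hwt]
  · by_cases h1 : v = a ∧ u = b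
    · obtain ⟨rfl, rfl⟩ := h1
      simpa using (hγ.2 v u hvu huv).symm
    by_cases h2 : v = b ∧ u = a
    · obtain ⟨rfl, rfl⟩ := h2
      exact absurd hab.1 (lt_asymm hvu)
    exact hγ.2 _ _ ((haut v u h1 h2).2 ⟨hvu, huv⟩).1 ((haut v u h1 h2).2 ⟨hvu, huv⟩).2

lemma asc_comp_swap_add (γ : V → Finset (Fin N)) :
    asc n I h (γ ∘ swap a b) + ascCount (γ a) (γ b) =
      asc n I h γ + ascCount (γ b) (γ a) := by
  have hne : a ≠ b := by rintro rfl; exact lt_irrefl _ hab.1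
  have hba : ¬ Adj h b a := fun hba => lt_asymm hab.1 hba.1
  have hreindex : asc n I h (γ ∘ swap a b) =
      ∑ v : V, ∑ u : V, if Adj h (swap a b v) (swap a b u) then ascCount (γ v) (γ u) else 0 := by
    rw [asc_eq_sum, ← Equiv.sum_comp (swap a b)]
    refine sum_congr rfl fun v _ => ?_
    rw [← Equiv.sum_comp (swap a b)]
    simp
  have hterm : ∀ v u : V,
      (if Adj h (swap a b v) (swap a b u) then ascCount (γ v) (γ u) else 0) +
        (if v = a ∧ u = b then ascCount (γ a) (γ b) else 0) =
      (if Adj h v u then ascCount (γ v) (γ u) else 0) +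
        if v = b ∧ u = a then ascCount (γ b) (γ a) else 0 := by
    intro v u
    by_cases h1 : v = a ∧ u = b
    · obtain ⟨rfl, rfl⟩ := h1
      simp [hab, hba, hne]
    by_cases h2 : v = b ∧ u = a
    · obtain ⟨rfl, rfl⟩ := h2
      simp [hab, hba, hne]
    simp [haut v u h1 h2, h1, h2]
  have := sum_congr rfl fun v (_ : v ∈ univ) => sum_congr rfl fun u (_ : u ∈ univ) => hterm v u
  simpa [hreindex, asc_eq_sum, sum_add_distrib, ite_and] using this

end Swap

noncomputable def csfTerm (h : ℕ → ℕ) (γ : V → Finset (Fin N)) :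
    Polynomial (MvPolynomial (Fin N) ℤ) :=
  if IsProper n I h γ then C (colorMonomial γ) * X ^ asc n I h γ else 0

lemma csf_eq_sum_csfTerm (h : ℕ → ℕ) : csf n I h N = ∑ γ : V → Finset (Fin N), csfTerm h γ := by
  rw [csf, sum_filter]
  rfl

noncomputable def modularTerm (h : ℕ → ℕ) (a b c : V) (γ : V → Finset (Fin N)) :
    Polynomial (MvPolynomial (Fin N) ℤ) :=
  if IsProper n I h γ then
    C (colorMonomial γ) * X ^ asc n I h γ * modularWeight X (γ a) (γ b) (γ c)
  else 0

section ModularLaw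

variable {h₀ h₁ h₂ : ℕ → ℕ} {a b c : {x // x ∈ verts n I}}

lemma one_add_X_mul_csfTerm_sub_eq_modularTerm
    (hadj₁ : ∀ v u : V, Adj h₁ v u ↔ Adj h₀ v u ∨ (v = b ∧ u = c)) (hbc : ¬ Adj h₀ b c)
    (hadj₂ : ∀ v u : V, Adj h₂ v u ↔ Adj h₁ v u ∨ (v = a ∧ u = c)) (hac : ¬ Adj h₁ a c)
    (γ : V → Finset (Fin N)) :
    (1 + X) * csfTerm h₁ γ - (csfTerm h₂ γ + X * csfTerm h₀ γ) = modularTerm h₀ a b c γ := by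
  rw [csfTerm, csfTerm, csfTerm, modularTerm, isProper_iff_of_adj_iff hadj₂,
    isProper_iff_of_adj_iff hadj₁, asc_eq_add_of_adj_iff hadj₂ hac,
    asc_eq_add_of_adj_iff hadj₁ hbc, modularWeight]
  by_cases hγ : IsProper n I h₀ γ
  · simp only [hγ, true_and]
    split_ifs <;> ring
  · simp [hγ]

variable (hab : Adj h₀ a b)
  (haut : ∀ v u : {x // x ∈ verts n I}, ¬(v = a ∧ u = b) → ¬(v = b ∧ u = a) →
    (Adj h₀ (swap a b v) (swap a b u) ↔ Adj h₀ v u))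
  (hwa : wt n I a = 1) (hwb : wt n I b = 1)
include hab haut hwa hwb

lemma modularTerm_add_comp_swap (hwc : wt n I c = 1) (hca : c ≠ a) (hcb : c ≠ b)
    (γ : V → Finset (Fin N)) :
    modularTerm h₀ a b c γ + modularTerm h₀ a b c (γ ∘ swap a b) = 0 := by
  have hwab : wt n I a = wt n I b := hwa.trans hwb.symm
  by_cases hγ : IsProper n I h₀ γ
  swap
  · have hγσ : ¬ IsProper n I h₀ (γ ∘ swap a b) := fun hγσ =>
      hγ (by simpa only [comp_swap_comp_swap] using hγσ.comp_swap hab haut hwab)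
    simp [modularTerm, hγ, hγσ]
  obtain ⟨x, hx⟩ := card_eq_one.1 ((hγ.1 a).trans hwa)
  obtain ⟨y, hy⟩ := card_eq_one.1 ((hγ.1 b).trans hwb)
  obtain ⟨z, hz⟩ := card_eq_one.1 ((hγ.1 c).trans hwc)
  have hxy : x ≠ y := by simpa [hx, hy] using hγ.2 a b hab.1 hab.2
  have hasc := asc_comp_swap_add hab haut γ
  rw [hx, hy, ascCount_singleton, ascCount_singleton] at hasc
  simp only [modularTerm, hγ, hγ.comp_swap hab haut hwab, if_true, colorMonomial_comp_perm,
    comp_apply, swap_apply_left, swap_apply_right, swap_apply_of_ne_of_ne hca hcb, hx, hy, hz]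
  rcases hxy.lt_or_gt with hlt | hgt
  · rw [show asc n I h₀ γ = asc n I h₀ (γ ∘ swap a b) + 1 by
      simpa [hlt, hlt.not_gt] using hasc.symm]
    linear_combination (C (colorMonomial γ) * X ^ asc n I h₀ (γ ∘ swap a b)) *
      mul_modularWeight_add_modularWeight_eq_zero (X : Polynomial (MvPolynomial (Fin N) ℤ)) hlt z
  · rw [show asc n I h₀ (γ ∘ swap a b) = asc n I h₀ γ + 1 by
      simpa [hgt, hgt.not_gt] using hasc]
    linear_combination (C (colorMonomial γ) * X ^ asc n I h₀ γ) *
      mul_modularWeight_add_modularWeight_eq_zero (X : Polynomial (MvPolynomial (Fin N) ℤ)) hgt z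

omit haut hwb in
lemma modularTerm_eq_zero_of_comp_swap_eq {γ : V → Finset (Fin N)} (hfix : γ ∘ swap a b = γ) :
    modularTerm h₀ a b c γ = 0 := by
  refine if_neg fun hγ => ?_
  have hba : γ b = γ a := by simpa using congrFun hfix a
  have hdisj := hγ.2 a b hab.1 hab.2
  rw [hba, disjoint_self_iff_empty] at hdisj
  simpa [hdisj, hwa] using hγ.1 a

theorem csf_modular_law_of_adj_iff
    (hadj₁ : ∀ v u : V, Adj h₁ v u ↔ Adj h₀ v u ∨ (v = b ∧ u = c)) (hbc : ¬ Adj h₀ b c)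
    (hadj₂ : ∀ v u : V, Adj h₂ v u ↔ Adj h₁ v u ∨ (v = a ∧ u = c)) (hac : ¬ Adj h₁ a c)
    (hwc : wt n I c = 1) :
    (1 + X) * csf n I h₁ N = csf n I h₂ N + X * csf n I h₀ N := by
  have hbc' : (b : ℕ) < c := ((hadj₁ b c).2 (.inr ⟨rfl, rfl⟩)).1
  have hcb : c ≠ b := by rintro rfl; exact lt_irrefl _ hbc'
  have hca : c ≠ a := by rintro rfl; exact lt_asymm hab.1 hbc'
  rw [← sub_eq_zero, csf_eq_sum_csfTerm, csf_eq_sum_csfTerm, csf_eq_sum_csfTerm, mul_sum, mul_sum,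
    ← sum_add_distrib, ← sum_sub_distrib]
  simp_rw [one_add_X_mul_csfTerm_sub_eq_modularTerm hadj₁ hbc hadj₂ hac]
  exact sum_ninvolution (· ∘ swap a b)
    (modularTerm_add_comp_swap hab haut hwa hwb hwc hca hcb)
    (fun γ hγ hfix => hγ (modularTerm_eq_zero_of_comp_swap_eq hab hwa hfix))
    (fun _ => mem_univ _) (fun γ => comp_swap_comp_swap γ a b)

end ModularLaw

end Coloring

lemma mem_verts_Icc_iff {n v : ℕ} (hn : 1 ≤ n) :
    v ∈ verts n (Icc 1 (n - 1)) ↔ 1 ≤ v ∧ v ≤ n := by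
  simp only [verts, mem_insert, mem_Icc]
  omega

lemma wt_Icc_eq_one {n v : ℕ} (hn : 1 ≤ n) (hv : v ∈ verts n (Icc 1 (n - 1))) :
    wt n (Icc 1 (n - 1)) v = 1 := by
  rw [mem_verts_Icc_iff hn] at hv
  have hsup : ({u ∈ verts n (Icc 1 (n - 1)) | u < v}).sup id = v - 1 := by
    refine le_antisymm (Finset.sup_le fun u hu => ?_) ?_
    · have := (mem_filter.1 hu).2
      simp only [id]
      omega
    · rcases hv.1.eq_or_lt with rfl | hv1
      · simp
      · exact le_sup (f := id)
          (mem_filter.2 ⟨(mem_verts_Icc_iff hn).2 ⟨by omega, by omega⟩, by omega⟩)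
  rw [wt, hsup]
  omega

end GenHess

open GenHess

theorem csf_modular_law_two_general (n : ℕ) (h : ℕ → ℕ)
    (hgen : IsGenHess n (Finset.Icc 1 (n - 1)) h)
    (j : ℕ) (hj1 : 1 ≤ j) (hjn : j < n)
    (hval : h (j + 1) = h j + 1) (hgt : j < h j)
    (hempty : ∀ i ∈ Finset.Icc 1 n, h i ≠ j)
    (N : ℕ) :
    (1 + Polynomial.X) * csf n (Finset.Icc 1 (n - 1)) h N =
      csf n (Finset.Icc 1 (n - 1)) (Function.update h j (h j + 1)) N +
      Polynomial.X * csf n (Finset.Icc 1 (n - 1)) (Function.update h (j + 1) (h j)) N := by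
  have hn : 1 ≤ n := by omega
  have hmem : ∀ {v}, 1 ≤ v → v ≤ n → v ∈ verts n (Finset.Icc 1 (n - 1)) :=
    fun h1 h2 => (mem_verts_Icc_iff hn).2 ⟨h1, h2⟩
  have hc : h j + 1 ≤ n := by
    have := hgen.2.1 (j + 1) (hmem (by omega) hjn)
    rw [hval, mem_verts_Icc_iff hn] at this
    exact this.2
  have hwt (v : {x // x ∈ verts n (Finset.Icc 1 (n - 1))}) : wt n (Finset.Icc 1 (n - 1)) v = 1 :=
    wt_Icc_eq_one hn v.2
  refine csf_modular_law_of_adj_iff (a := ⟨j, hmem hj1 hjn.le⟩)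
    (b := ⟨j + 1, hmem (by omega) hjn⟩) (c := ⟨h j + 1, hmem (by omega) hc⟩)
    ?hab ?haut (hwt _) (hwt _) ?hadj₁ ?hbc ?hadj₂ ?hac (hwt _)
  case hab => simp [Adj, hgt]
  case haut =>
    intro v u hvu huv
    rw [← Subtype.val_injective.swap_apply, ← Subtype.val_injective.swap_apply]
    refine adj_swap_iff (by simp) ?_ (by simpa [Subtype.ext_iff] using hvu)
      (by simpa [Subtype.ext_iff] using huv)
    by_cases hv : (v : ℕ) = j + 1
    · simpa [hv] using hgt.ne'
    · simpa [hv] using hempty v (Finset.mem_Icc.2 ((mem_verts_Icc_iff hn).1 v.2))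
  case hadj₁ =>
    intro v u
    simpa [Subtype.ext_iff] using adj_iff_adj_update_or hval (by omega) v u
  case hbc => simp [Adj]
  case hadj₂ =>
    intro v u
    simpa [Subtype.ext_iff] using
      adj_iff_adj_update_or (Function.update_self j (h j + 1) h) (by omega) v u
  case hac => simp [Adj]

/-- Proposition 64(2), eq. (70), the modular law (second case):
`(1+q) csf(h) = csf(h⁺) + q csf(h⁻)` where `h⁺ j = h j + 1`, `h⁻ (j+1) = h j`. -/
theorem csf_modular_law_two (n : ℕ) (h : ℕ → ℕ)
    (hgen : IsGenHess n (Finset.Icc 1 (n - 1)) h)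
    (j : ℕ) (hj1 : 1 ≤ j) (hjn : j < n)
    (hval : h (j + 1) = h j + 1) (hgt : j < h j)
    (hempty : ∀ i ∈ Finset.Icc 1 n, h i ≠ j)
    (N : ℕ) (hN : 1 ≤ N) :
    (1 + Polynomial.X) * csf n (Finset.Icc 1 (n - 1)) h N =
      csf n (Finset.Icc 1 (n - 1)) (Function.update h j (h j + 1)) N +
      Polynomial.X * csf n (Finset.Icc 1 (n - 1)) (Function.update h (j + 1) (h j)) N :=
  csf_modular_law_two_general n h hgen j hj1 hjn hval hgt hempty N
end

section
/- [Modification identity, empty preimage] Let h ∈ H_{r,n} and 1 ≤ j < r. Suppose h(j) = h(j+1), h(j) ≠ j+1, h(j)−1 ∈ [r], h(j−1) < h(j) when j ≥ 2, and no i ∈ [r] satisfies h(i) = j. Define A, B ∈ H_{r,n} by: A(i) = h(i) for i ≠ j and A(j) = h(j)−1; B(i) = h(i) for i ∉ {j, j+1} and B(j) = B(j+1) = h(j)−1. Then for every N ≥ 1, csf_q^N(h) = (1+q) · csf_q^N(A) − q · csf_q^N(B). (This is formula (75) of Proposition 73(1), expressed via chromatic quasisymmetric functions using the paper's generalized Shareshian–Wachs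 theorem.) -/
open GenHess

namespace CsfAux

open Finset

lemma sum_pair {ι M : Type*} [Fintype ι] [DecidableEq ι] [AddCommMonoid M]
    (p q : ι) (F : ι → ι → M) :
    (∑ v : ι, ∑ u : ι, if v = p ∧ u = q then F v u else 0) = F p q := by
  rw [Finset.sum_eq_single p]
  · simp
  · intro v _ hv
    simp [hv]
  · simp

lemma Esing {N : ℕ} (α β : Fin N) :
    ((({α} : Finset (Fin N)) ×ˢ ({β} : Finset (Fin N))).filter
      fun ab => ab.1 < ab.2).card = if α < β then 1 else 0 := by
  rw [Finset.singleton_product_singleton]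
  rw [Finset.filter_singleton]
  split_ifs <;> simp_all

lemma sum_swap_reindex {ι R : Type*} [DecidableEq ι] [AddCommMonoid R]
    {S T : Finset ι} {Φ : ι → ι}
    (hST : ∀ γ ∈ S, Φ γ ∈ T) (hTS : ∀ γ ∈ T, Φ γ ∈ S)
    (hinv : ∀ γ, Φ (Φ γ) = γ) (F : ι → R) :
    ∑ γ ∈ T, F γ = ∑ γ ∈ S, F (Φ γ) := by
  refine Finset.sum_nbij' Φ Φ hTS hST (fun a _ => hinv a) (fun a _ => hinv a) ?_
  intro a ha
  rw [hinv a]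

lemma sum_invol_cancel {ι R : Type*} [CommRing R] [IsDomain R] [CharZero R]
    {S : Finset ι} {Φ : ι → ι}
    (hΦS : ∀ γ ∈ S, Φ γ ∈ S) (hinv : ∀ γ, Φ (Φ γ) = γ)
    (F G : ι → R) (hkey : ∀ γ ∈ S, F γ + F (Φ γ) = G γ + G (Φ γ)) :
    ∑ γ ∈ S, F γ = ∑ γ ∈ S, G γ := by
  classical
  have hre : ∀ (F : ι → R), ∑ γ ∈ S, F (Φ γ) = ∑ γ ∈ S, F γ :=
    fun F => (sum_swap_reindex hΦS hΦS hinv F).symm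
  have h2 : (2 : R) * ∑ γ ∈ S, F γ = (2 : R) * ∑ γ ∈ S, G γ := by
    have h0 := Finset.sum_congr rfl hkey
    rw [Finset.sum_add_distrib, Finset.sum_add_distrib, hre F, hre G] at h0
    rw [two_mul, two_mul]
    exact h0
  exact mul_left_cancel₀ two_ne_zero h2

lemma pairP {R : Type*} [CommRing R] (X w : R) (a b c s t : ℕ)
    (hab : a ≠ b) (hac : a ≠ c) (hbc : b ≠ c)
    (hrel : t + (if a < b then 1 else 0) = s + (if b < a then 1 else 0)) :
    w * X ^ (s + (if a < c then 1 else 0) + (if b < c then 1 else 0)) + X * (w * X ^ s)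
      + (w * X ^ (t + (if b < c then 1 else 0) + (if a < c then 1 else 0)) + X * (w * X ^ t))
    = (1 + X) * (w * X ^ (s + (if b < c then 1 else 0)))
      + (1 + X) * (w * X ^ (t + (if a < c then 1 else 0))) := by
  rcases Nat.lt_trichotomy a b with hb | hb | hb
  · rw [if_pos hb, if_neg (by omega)] at hrel
    obtain rfl : s = t + 1 := by omega
    split_ifs <;> first | (exfalso; omega) | ring
  · exact absurd hb hab
  · rw [if_neg (by omega), if_pos hb] at hrel
    obtain rfl : t = s + 1 := by omega
    split_ifs <;> first | (exfalso; omega) | ring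

lemma pairE {R : Type*} [CommRing R] (X w : R) (a b c s t : ℕ)
    (hab : a ≠ b) (hac : a = c)
    (hrel : t + (if a < b then 1 else 0) = s + (if b < a then 1 else 0)) :
    X * (w * X ^ s) + X * (w * X ^ t)
      = (1 + X) * (w * X ^ (s + (if b < c then 1 else 0))) := by
  subst hac
  rcases Nat.lt_trichotomy a b with hb | hb | hb
  · rw [if_pos hb, if_neg (by omega)] at hrel
    obtain rfl : s = t + 1 := by omega
    rw [if_neg (by omega)]
    ring
  · exact absurd hb hab
  · rw [if_neg (by omega), if_pos hb] at hrel
    obtain rfl : t = s + 1 := by omega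
    rw [if_pos hb]
    ring

end CsfAux

/-- Proposition 73(1), eq. (75): modification identity with empty preimage:
`csf(h) = (1+q) csf(A) - q csf(B)` where `A j = h j - 1` and
`B j = B (j+1) = h j - 1` (elsewhere both agree with `h`). -/
theorem csf_modification_empty (n r : ℕ) (h : ℕ → ℕ)
    (hgen : IsGenHess n (Finset.Icc 1 r) h)
    (j : ℕ) (hj1 : 1 ≤ j) (hjr : j < r)
    (hval : h j = h (j + 1)) (hne : h j ≠ j + 1)
    (hhr : h j - 1 ∈ Finset.Icc 1 r)
    (hprev : 2 ≤ j → h (j - 1) < h j)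
    (hempty : ∀ i ∈ Finset.Icc 1 r, h i ≠ j)
    (N : ℕ) (hN : 1 ≤ N) :
    csf n (Finset.Icc 1 r) h N =
      (1 + Polynomial.X) * csf n (Finset.Icc 1 r) (Function.update h j (h j - 1)) N -
      Polynomial.X * csf n (Finset.Icc 1 r)
        (fun i => if i = j ∨ i = j + 1 then h j - 1 else h i) N := by
  classical
  obtain ⟨hIcc, hmap, hge, hmono⟩ := hgen
  set I : Finset ℕ := Finset.Icc 1 r with hIdef
  set m : ℕ := h j with hm
  -- ===== numeric groundwork =====
  have hrI : r ∈ I := by simp [hIdef, Finset.mem_Icc]; omega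
  have hrn : r + 1 ≤ n := by have := hIcc r hrI; omega
  have memV : ∀ v : ℕ, v ∈ verts n I ↔ v = n ∨ (1 ≤ v ∧ v ≤ r) := by
    intro v; simp [verts, hIdef, Finset.mem_Icc]
  have hjV : j ∈ verts n I := by rw [memV]; omega
  have hj1V : j + 1 ∈ verts n I := by rw [memV]; omega
  have hm2 : j + 2 ≤ m := by
    have h1 := hge (j+1) hj1V
    rw [← hval] at h1
    omega
  have hmr : 2 ≤ m ∧ m - 1 ≤ r := by
    rw [hIdef, Finset.mem_Icc] at hhr; omega
  have hmV : m ∈ verts n I := hmap j hjV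
  have hmn : m ≤ r + 1 := by
    rw [memV] at hmV
    omega
  have hhj1 : h (j + 1) = m := hval.symm
  -- ===== abbreviations =====
  set A : ℕ → ℕ := Function.update h j (m - 1) with hA
  set B : ℕ → ℕ := (fun i => if i = j ∨ i = j + 1 then m - 1 else h i) with hB
  have hBj : B j = m - 1 := by simp [hB]
  have hBj1 : B (j + 1) = m - 1 := by simp [hB]
  have hBo : ∀ v : ℕ, v ≠ j → v ≠ j + 1 → B v = h v := by
    intro v h1 h2; simp [hB, h1, h2]
  have hAj : A j = m - 1 := by simp [hA]
  have hAo : ∀ v : ℕ, v ≠ j → A v = h v := by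
    intro v h1; simp [hA, Function.update_of_ne h1]
  have hAj1 : A (j + 1) = m := by rw [hAo _ (by omega), hhj1]
  set VT := {x // x ∈ verts n I} with hVT
  set vj : VT := ⟨j, hjV⟩ with hvj
  set vj1 : VT := ⟨j + 1, hj1V⟩ with hvj1
  set vm : VT := ⟨m, hmV⟩ with hvm
  have vjval : vj.1 = j := rfl
  have vj1val : vj1.1 = j + 1 := rfl
  have vmval : vm.1 = m := rfl
  have eqvj : ∀ v : VT, v = vj ↔ v.1 = j :=
    fun v => ⟨fun hh => by rw [hh], fun hh => Subtype.ext hh⟩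
  have eqvj1 : ∀ v : VT, v = vj1 ↔ v.1 = j + 1 :=
    fun v => ⟨fun hh => by rw [hh], fun hh => Subtype.ext hh⟩
  have eqvm : ∀ v : VT, v = vm ↔ v.1 = m :=
    fun v => ⟨fun hh => by rw [hh], fun hh => Subtype.ext hh⟩
  have hempty' : ∀ u : VT, u.1 < j → h u.1 ≠ j := by
    intro u hu
    obtain ⟨uv, huv⟩ := u
    simp only at hu ⊢
    have h2 : uv = n ∨ (1 ≤ uv ∧ uv ≤ r) := (memV uv).mp huv
    apply hempty
    rw [hIdef, Finset.mem_Icc]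
    omega
  set Ee : Finset (Fin N) → Finset (Fin N) → ℕ :=
    (fun s t => ((s ×ˢ t).filter fun ab => ab.1 < ab.2).card) with hEe
  have ascdef : ∀ (f : ℕ → ℕ) (γ : VT → Finset (Fin N)),
      asc n I f γ = ∑ v : VT, ∑ u : VT,
        if v.1 < u.1 ∧ u.1 ≤ f v.1 then Ee (γ v) (γ u) else 0 := fun f γ => rfl
  -- ===== weights are 1 =====
  have wt1 : ∀ v : ℕ, v ∈ verts n I → 1 ≤ v → v ≤ r + 1 → wt n I v = 1 := by
    intro v hv h1 h2
    have hsup : ((verts n I).filter (fun u => u < v)).sup id = v - 1 := by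
      apply le_antisymm
      · apply Finset.sup_le
        intro u hu
        rw [Finset.mem_filter] at hu
        show u ≤ v - 1
        omega
      · rcases Nat.lt_or_ge v 2 with hv2 | hv2
        · have : v - 1 = 0 := by omega
          simp [this]
        · have hmem : v - 1 ∈ (verts n I).filter (fun u => u < v) := by
            rw [Finset.mem_filter]
            refine ⟨?_, by omega⟩
            rw [memV]
            right
            omega
          calc v - 1 = id (v - 1) := rfl
          _ ≤ _ := Finset.le_sup hmem
    rw [wt, hsup]
    omega
  -- ===== ascent comparison lemmas =====
  have point_h : ∀ (γ : VT → Finset (Fin N)) (v u : VT),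
      (if v.1 < u.1 ∧ u.1 ≤ h v.1 then Ee (γ v) (γ u) else 0)
        = (if v.1 < u.1 ∧ u.1 ≤ B v.1 then Ee (γ v) (γ u) else 0)
          + (if v = vj ∧ u = vm then Ee (γ v) (γ u) else 0)
          + (if v = vj1 ∧ u = vm then Ee (γ v) (γ u) else 0) := by
    intro γ v u
    simp only [eqvj, eqvj1, eqvm]
    by_cases hv : v.1 = j
    · rw [hv, hBj, ← hm]
      split_ifs <;> omega
    · by_cases hv1 : v.1 = j + 1
      · rw [hv1, hBj1, hhj1]
        split_ifs <;> omega
      · rw [hBo v.1 hv hv1]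
        split_ifs <;> omega
  have point_A : ∀ (γ : VT → Finset (Fin N)) (v u : VT),
      (if v.1 < u.1 ∧ u.1 ≤ A v.1 then Ee (γ v) (γ u) else 0)
        = (if v.1 < u.1 ∧ u.1 ≤ B v.1 then Ee (γ v) (γ u) else 0)
          + (if v = vj1 ∧ u = vm then Ee (γ v) (γ u) else 0) := by
    intro γ v u
    simp only [eqvj1, eqvm]
    by_cases hv : v.1 = j
    · rw [hv, hBj, hAj]
      split_ifs <;> omega
    · by_cases hv1 : v.1 = j + 1
      · rw [hv1, hBj1, hAj1]
        split_ifs <;> omega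
      · rw [hBo v.1 hv hv1, hAo v.1 hv]
        split_ifs <;> omega
  have asc_h_eq : ∀ γ : VT → Finset (Fin N),
      asc n I h γ = asc n I B γ + Ee (γ vj) (γ vm) + Ee (γ vj1) (γ vm) := by
    intro γ
    rw [ascdef h γ, ascdef B γ]
    have : (∑ v : VT, ∑ u : VT, if v.1 < u.1 ∧ u.1 ≤ h v.1 then Ee (γ v) (γ u) else 0)
        = (∑ v : VT, ∑ u : VT, if v.1 < u.1 ∧ u.1 ≤ B v.1 then Ee (γ v) (γ u) else 0)
          + (∑ v : VT, ∑ u : VT, if v = vj ∧ u = vm then Ee (γ v) (γ u) else 0)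
          + (∑ v : VT, ∑ u : VT, if v = vj1 ∧ u = vm then Ee (γ v) (γ u) else 0) := by
      rw [← Finset.sum_add_distrib, ← Finset.sum_add_distrib]
      refine Finset.sum_congr rfl fun v _ => ?_
      rw [← Finset.sum_add_distrib, ← Finset.sum_add_distrib]
      exact Finset.sum_congr rfl fun u _ => point_h γ v u
    rw [this, CsfAux.sum_pair vj vm, CsfAux.sum_pair vj1 vm]
  have asc_A_eq : ∀ γ : VT → Finset (Fin N),
      asc n I A γ = asc n I B γ + Ee (γ vj1) (γ vm) := by
    intro γ
    rw [ascdef A γ, ascdef B γ]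
    have : (∑ v : VT, ∑ u : VT, if v.1 < u.1 ∧ u.1 ≤ A v.1 then Ee (γ v) (γ u) else 0)
        = (∑ v : VT, ∑ u : VT, if v.1 < u.1 ∧ u.1 ≤ B v.1 then Ee (γ v) (γ u) else 0)
          + (∑ v : VT, ∑ u : VT, if v = vj1 ∧ u = vm then Ee (γ v) (γ u) else 0) := by
      rw [← Finset.sum_add_distrib]
      refine Finset.sum_congr rfl fun v _ => ?_
      rw [← Finset.sum_add_distrib]
      exact Finset.sum_congr rfl fun u _ => point_A γ v u
    rw [this, CsfAux.sum_pair vj1 vm]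
  -- ===== properness comparison lemmas =====
  have prop_h_iff : ∀ γ : VT → Finset (Fin N),
      IsProper n I h γ ↔ (IsProper n I B γ ∧
        (Disjoint (γ vj1) (γ vm) ∧ Disjoint (γ vj) (γ vm))) := by
    intro γ
    constructor
    · rintro ⟨hc, hd⟩
      refine ⟨⟨hc, ?_⟩, ?_, ?_⟩
      · intro v u hlt hle
        apply hd v u hlt
        by_cases hv : v.1 = j
        · rw [hv, hBj] at hle; rw [hv, ← hm]; omega
        · by_cases hv1 : v.1 = j + 1
          · rw [hv1, hBj1] at hle; rw [hv1, hhj1]; omega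
          · rw [hBo v.1 hv hv1] at hle; exact hle
      · exact hd vj1 vm (by rw [vj1val, vmval]; omega)
          (by rw [vj1val, vmval, hhj1])
      · exact hd vj vm (by rw [vjval, vmval]; omega)
          (by rw [vjval, vmval, ← hm])
    · rintro ⟨⟨hc, hd⟩, hD2, hD1⟩
      refine ⟨hc, ?_⟩
      intro v u hlt hle
      by_cases hv : v.1 = j
      · by_cases hu : u.1 = m
        · rw [(eqvj v).mpr hv, (eqvm u).mpr hu]; exact hD1
        · apply hd v u hlt
          rw [hv, ← hm] at hle
          rw [hv, hBj]
          omega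
      · by_cases hv1 : v.1 = j + 1
        · by_cases hu : u.1 = m
          · rw [(eqvj1 v).mpr hv1, (eqvm u).mpr hu]; exact hD2
          · apply hd v u hlt
            rw [hv1, hhj1] at hle
            rw [hv1, hBj1]
            omega
        · apply hd v u hlt
          rw [hBo v.1 hv hv1]
          exact hle
  have prop_A_iff : ∀ γ : VT → Finset (Fin N),
      IsProper n I A γ ↔ (IsProper n I B γ ∧ Disjoint (γ vj1) (γ vm)) := by
    intro γ
    constructor
    · rintro ⟨hc, hd⟩
      refine ⟨⟨hc, ?_⟩, ?_⟩
      · intro v u hlt hle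
        apply hd v u hlt
        by_cases hv : v.1 = j
        · rw [hv, hBj] at hle; rw [hv, hAj]; omega
        · by_cases hv1 : v.1 = j + 1
          · rw [hv1, hBj1] at hle; rw [hv1, hAj1]; omega
          · rw [hBo v.1 hv hv1] at hle; rw [hAo v.1 hv]; exact hle
      · exact hd vj1 vm (by rw [vj1val, vmval]; omega)
          (by rw [vj1val, vmval, hAj1])
    · rintro ⟨⟨hc, hd⟩, hD2⟩
      refine ⟨hc, ?_⟩
      intro v u hlt hle
      by_cases hv : v.1 = j
      · apply hd v u hlt
        rw [hv, hAj] at hle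
        rw [hv, hBj]
        omega
      · by_cases hv1 : v.1 = j + 1
        · by_cases hu : u.1 = m
          · rw [(eqvj1 v).mpr hv1, (eqvm u).mpr hu]; exact hD2
          · apply hd v u hlt
            rw [hv1, hAj1] at hle
            rw [hv1, hBj1]
            omega
        · apply hd v u hlt
          rw [hBo v.1 hv hv1]
          rw [hAo v.1 hv] at hle
          exact hle
  -- ===== the swap machinery =====
  set σ : Equiv.Perm VT := Equiv.swap vj vj1 with hσ
  have svj : σ vj = vj1 := Equiv.swap_apply_left vj vj1
  have svj1 : σ vj1 = vj := Equiv.swap_apply_right vj vj1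
  have so : ∀ u : VT, u ≠ vj → u ≠ vj1 → σ u = u :=
    fun u h1 h2 => Equiv.swap_apply_of_ne_of_ne h1 h2
  have ss : ∀ u : VT, σ (σ u) = u := fun u => Equiv.swap_apply_self vj vj1 u
  have svm : σ vm = vm := by
    apply so <;> rw [Ne, Subtype.ext_iff] <;> rw [vmval] <;> omega
  set Φ : (VT → Finset (Fin N)) → (VT → Finset (Fin N)) :=
    (fun γ => fun v => γ (σ v)) with hΦ
  have Φinv : ∀ γ, Φ (Φ γ) = γ := by
    intro γ; funext v; simp only [hΦ, ss]
  have Φvj : ∀ γ, Φ γ vj = γ vj1 := by intro γ; simp only [hΦ, svj]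
  have Φvj1 : ∀ γ, Φ γ vj1 = γ vj := by intro γ; simp only [hΦ, svj1]
  have Φvm : ∀ γ, Φ γ vm = γ vm := by intro γ; simp only [hΦ, svm]
  have prop_B_swap : ∀ γ : VT → Finset (Fin N), IsProper n I B γ → IsProper n I B (Φ γ) := by
    rintro γ ⟨hc, hd⟩
    constructor
    · intro v
      show (γ (σ v)).card = wt n I v.1
      rw [hc (σ v)]
      by_cases h1 : v = vj
      · rw [h1, svj, vj1val, vjval, wt1 _ hj1V (by omega) (by omega),
          wt1 _ hjV (by omega) (by omega)]
      · by_cases h2 : v = vj1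
        · rw [h2, svj1, vjval, vj1val, wt1 _ hj1V (by omega) (by omega),
            wt1 _ hjV (by omega) (by omega)]
        · rw [so v h1 h2]
    · intro v u hlt hle
      show Disjoint (γ (σ v)) (γ (σ u))
      by_cases hv : v = vj
      · by_cases hu : u = vj1
        · rw [hv, hu, svj, svj1]
          exact (hd vj vj1 (by rw [vjval, vj1val]; omega)
            (by rw [vjval, vj1val, hBj]; omega)).symm
        · have huj : u ≠ vj := by
            intro hh
            rw [hv, hh, vjval] at hlt
            omega
          rw [hv, svj, so u huj hu]
          apply hd vj1 u
          · rw [vj1val]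
            rw [hv, vjval] at hlt
            have : u.1 ≠ j + 1 := fun hh => hu ((eqvj1 u).mpr hh)
            omega
          · rw [vj1val, hBj1]
            rw [hv, vjval, hBj] at hle
            exact hle
      · by_cases hv1 : v = vj1
        · have huj1 : u ≠ vj1 := by
            intro hh
            rw [hv1, hh, vj1val] at hlt
            omega
          have huj : u ≠ vj := by
            intro hh
            rw [hv1, hh, vj1val, vjval] at hlt
            omega
          rw [hv1, svj1, so u huj huj1]
          apply hd vj u
          · rw [vjval]
            rw [hv1, vj1val] at hlt
            omega
          · rw [vjval, hBj]
            rw [hv1, vj1val, hBj1] at hle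
            exact hle
        · rw [so v hv hv1]
          have hvneqj : v.1 ≠ j := fun hh => hv ((eqvj v).mpr hh)
          have hvneqj1 : v.1 ≠ j + 1 := fun hh => hv1 ((eqvj1 v).mpr hh)
          have hBv : B v.1 = h v.1 := hBo v.1 hvneqj hvneqj1
          by_cases hu : u = vj
          · rw [hu, svj]
            rw [hu, vjval] at hlt hle
            have hne' : h v.1 ≠ j := hempty' v hlt
            apply hd v vj1
            · rw [vj1val]; omega
            · rw [vj1val]
              rw [hBv] at hle ⊢
              omega
          · by_cases hu1 : u = vj1
            · rw [hu1, svj1]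
              rw [hu1, vj1val] at hlt hle
              have hne' : h v.1 ≠ j := hempty' v (by omega)
              apply hd v vj
              · rw [vjval]; omega
              · rw [vjval]
                rw [hBv] at hle ⊢
                omega
            · rw [so u hu hu1]
              exact hd v u hlt hle
  have asc_B_swap : ∀ γ : VT → Finset (Fin N),
      asc n I B (Φ γ) + Ee (γ vj) (γ vj1) = asc n I B γ + Ee (γ vj1) (γ vj) := by
    intro γ
    have step : asc n I B (Φ γ) = ∑ v : VT, ∑ u : VT,
        (if (σ v).1 < (σ u).1 ∧ (σ u).1 ≤ B (σ v).1 then Ee (γ v) (γ u) else 0) := by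
      rw [ascdef]
      have inner : ∀ v : VT,
          (∑ u : VT, if v.1 < u.1 ∧ u.1 ≤ B v.1 then Ee (γ (σ v)) (γ (σ u)) else 0)
            = ∑ u : VT, if v.1 < (σ u).1 ∧ (σ u).1 ≤ B v.1 then Ee (γ (σ v)) (γ u) else 0 := by
        intro v
        apply Fintype.sum_equiv σ
        intro u
        rw [ss u]
      calc (∑ v : VT, ∑ u : VT,
              if v.1 < u.1 ∧ u.1 ≤ B v.1 then Ee (Φ γ v) (Φ γ u) else 0)
          = ∑ v : VT, ∑ u : VT,
              if v.1 < (σ u).1 ∧ (σ u).1 ≤ B v.1 then Ee (γ (σ v)) (γ u) else 0 :=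
            Finset.sum_congr rfl fun v _ => inner v
        _ = ∑ v : VT, ∑ u : VT,
              (if (σ v).1 < (σ u).1 ∧ (σ u).1 ≤ B (σ v).1 then Ee (γ v) (γ u) else 0) := by
            apply Fintype.sum_equiv σ
            intro v
            simp only [ss]
    have point : ∀ v u : VT,
        (if (σ v).1 < (σ u).1 ∧ (σ u).1 ≤ B (σ v).1 then Ee (γ v) (γ u) else 0)
          + (if v = vj ∧ u = vj1 then Ee (γ vj) (γ vj1) else 0)
        = (if v.1 < u.1 ∧ u.1 ≤ B v.1 then Ee (γ v) (γ u) else 0)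
          + (if v = vj1 ∧ u = vj then Ee (γ vj1) (γ vj) else 0) := by
      intro v u
      by_cases hv : v = vj
      · by_cases hu : u = vj1
        · rw [hv, hu, svj, svj1]
          simp only [eqvj, eqvj1, vjval, vj1val, hBj, hBj1, eq_self_iff_true, true_and, and_true, and_self, if_true]
          split_ifs <;> omega
        · by_cases hu2 : u = vj
          · rw [hv, hu2, svj]
            simp only [eqvj, eqvj1, vjval, vj1val, hBj, hBj1, eq_self_iff_true, true_and, and_true, and_self, if_true]
            split_ifs <;> omega
          · have hunej : u.1 ≠ j := fun hh => hu2 ((eqvj u).mpr hh)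
            have hunej1 : u.1 ≠ j + 1 := fun hh => hu ((eqvj1 u).mpr hh)
            rw [hv, svj, so u hu2 hu]
            simp only [eqvj, eqvj1, vjval, vj1val, hBj, hBj1, eq_self_iff_true, true_and, and_true, and_self, if_true]
            split_ifs <;> omega
      · by_cases hv1 : v = vj1
        · by_cases hu : u = vj
          · rw [hv1, hu, svj1, svj]
            simp only [eqvj, eqvj1, vjval, vj1val, hBj, hBj1, eq_self_iff_true, true_and, and_true, and_self, if_true]
            split_ifs <;> omega
          · by_cases hu1 : u = vj1
            · rw [hv1, hu1, svj1]
              simp only [eqvj, eqvj1, vjval, vj1val, hBj, hBj1, eq_self_iff_true, true_and, and_true, and_self, if_true]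
              split_ifs <;> omega
            · have hunej : u.1 ≠ j := fun hh => hu ((eqvj u).mpr hh)
              have hunej1 : u.1 ≠ j + 1 := fun hh => hu1 ((eqvj1 u).mpr hh)
              rw [hv1, svj1, so u hu hu1]
              simp only [eqvj, eqvj1, vjval, vj1val, hBj, hBj1, eq_self_iff_true, true_and, and_true, and_self, if_true]
              split_ifs <;> omega
        · have hvnej : v.1 ≠ j := fun hh => hv ((eqvj v).mpr hh)
          have hvnej1 : v.1 ≠ j + 1 := fun hh => hv1 ((eqvj1 v).mpr hh)
          have hBv : B v.1 = h v.1 := hBo v.1 hvnej hvnej1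
          rw [so v hv hv1]
          by_cases hu : u = vj
          · rw [hu, svj]
            simp only [eqvj, eqvj1, vjval, vj1val, hBv, eq_self_iff_true, true_and, and_true, and_self, if_true]
            by_cases hlt : v.1 < j
            · have hne' : h v.1 ≠ j := hempty' v hlt
              split_ifs <;> omega
            · split_ifs <;> omega
          · by_cases hu1 : u = vj1
            · rw [hu1, svj1]
              simp only [eqvj, eqvj1, vjval, vj1val, hBv, eq_self_iff_true, true_and, and_true, and_self, if_true]
              by_cases hlt : v.1 < j
              · have hne' : h v.1 ≠ j := hempty' v hlt
                split_ifs <;> omega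
              · split_ifs <;> omega
            · rw [so u hu hu1]
              have hunej : u.1 ≠ j := fun hh => hu ((eqvj u).mpr hh)
              have hunej1 : u.1 ≠ j + 1 := fun hh => hu1 ((eqvj1 u).mpr hh)
              simp only [eqvj, eqvj1, vjval, vj1val, eq_self_iff_true, true_and, and_true, and_self, if_true]
              split_ifs <;> omega
    have expand : ∀ (F G : VT → VT → ℕ),
        ((∑ v : VT, ∑ u : VT, F v u) + (∑ v : VT, ∑ u : VT, G v u))
          = ∑ v : VT, ∑ u : VT, (F v u + G v u) := by
      intro F G
      rw [← Finset.sum_add_distrib]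
      exact Finset.sum_congr rfl fun v _ => (Finset.sum_add_distrib).symm
    rw [step, ascdef B γ,
      ← CsfAux.sum_pair (p := vj) (q := vj1) (F := fun _ _ : VT => Ee (γ vj) (γ vj1)),
      ← CsfAux.sum_pair (p := vj1) (q := vj) (F := fun _ _ : VT => Ee (γ vj1) (γ vj)),
      expand, expand]
    exact Finset.sum_congr rfl fun v _ => Finset.sum_congr rfl fun u _ => point v u
  have W_swap : ∀ γ : VT → Finset (Fin N),
      (∏ v : VT, ∏ a ∈ Φ γ v, MvPolynomial.X (R := ℤ) a)
        = ∏ v : VT, ∏ a ∈ γ v, MvPolynomial.X a := by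
    intro γ
    exact Equiv.prod_comp σ (fun v => ∏ a ∈ γ v, MvPolynomial.X a)
  -- ===== assembling the identity =====
  set X : Polynomial (MvPolynomial (Fin N) ℤ) := Polynomial.X with hX
  set W : (VT → Finset (Fin N)) → Polynomial (MvPolynomial (Fin N) ℤ) :=
    (fun γ => Polynomial.C (∏ v : VT, ∏ a ∈ γ v, MvPolynomial.X a)) with hWdef
  have WΦ : ∀ γ, W (Φ γ) = W γ := fun γ => congrArg Polynomial.C (W_swap γ)
  have EeSing : ∀ a b : Fin N, Ee {a} {b} = if a < b then 1 else 0 :=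
    fun a b => CsfAux.Esing a b
  have csfdef : ∀ f : ℕ → ℕ, csf n I f N
      = ∑ γ ∈ Finset.univ.filter (fun γ : VT → Finset (Fin N) => IsProper n I f γ),
          W γ * X ^ asc n I f γ := fun f => rfl
  set P1 : (VT → Finset (Fin N)) → Prop := fun γ => Disjoint (γ vj) (γ vm) with hP1
  set P2 : (VT → Finset (Fin N)) → Prop := fun γ => Disjoint (γ vj1) (γ vm) with hP2
  set SB := Finset.univ.filter (fun γ : VT → Finset (Fin N) => IsProper n I B γ) with hSBdef
  set SA := SB.filter P2 with hSAdef
  set Sh := SA.filter P1 with hShdef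
  set EA := SA.filter (fun γ => ¬ P1 γ) with hEAdef
  set EB := SB.filter (fun γ => ¬ P2 γ) with hEBdef
  have memSB : ∀ γ, γ ∈ SB ↔ IsProper n I B γ := by
    intro γ
    rw [hSBdef, Finset.mem_filter]
    simp
  have memSA : ∀ γ, γ ∈ SA ↔ (IsProper n I B γ ∧ P2 γ) := by
    intro γ
    rw [hSAdef, Finset.mem_filter, memSB]
  have memSh : ∀ γ, γ ∈ Sh ↔ ((IsProper n I B γ ∧ P2 γ) ∧ P1 γ) := by
    intro γ
    rw [hShdef, Finset.mem_filter, memSA]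
  have memEA : ∀ γ, γ ∈ EA ↔ ((IsProper n I B γ ∧ P2 γ) ∧ ¬ P1 γ) := by
    intro γ
    rw [hEAdef, Finset.mem_filter, memSA]
  have memEB : ∀ γ, γ ∈ EB ↔ (IsProper n I B γ ∧ ¬ P2 γ) := by
    intro γ
    rw [hEBdef, Finset.mem_filter, memSB]
  have sing : ∀ γ : VT → Finset (Fin N), IsProper n I B γ →
      ∃ α β ξ : Fin N, γ vj = {α} ∧ γ vj1 = {β} ∧ γ vm = {ξ} ∧ α ≠ β := by
    intro γ hγ
    obtain ⟨hc, hd⟩ := hγ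
    have c1 : (γ vj).card = 1 := by
      rw [hc vj, vjval]; exact wt1 j hjV (by omega) (by omega)
    have c2 : (γ vj1).card = 1 := by
      rw [hc vj1, vj1val]; exact wt1 (j+1) hj1V (by omega) (by omega)
    have c3 : (γ vm).card = 1 := by
      rw [hc vm, vmval]; exact wt1 m hmV (by omega) (by omega)
    obtain ⟨α, hα⟩ := Finset.card_eq_one.mp c1
    obtain ⟨β, hβ⟩ := Finset.card_eq_one.mp c2
    obtain ⟨ξ, hξ⟩ := Finset.card_eq_one.mp c3
    refine ⟨α, β, ξ, hα, hβ, hξ, ?_⟩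
    have hdis := hd vj vj1 (by rw [vjval, vj1val]; omega)
      (by rw [vjval, vj1val, hBj]; omega)
    rw [hα, hβ] at hdis
    exact Finset.disjoint_singleton.mp hdis
  have ΦSh : ∀ γ ∈ Sh, Φ γ ∈ Sh := by
    intro γ hγ
    rw [memSh] at hγ ⊢
    obtain ⟨⟨hBγ, h2⟩, h1⟩ := hγ
    refine ⟨⟨prop_B_swap γ hBγ, ?_⟩, ?_⟩
    · show Disjoint (Φ γ vj1) (Φ γ vm)
      rw [Φvj1, Φvm]
      exact h1
    · show Disjoint (Φ γ vj) (Φ γ vm)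
      rw [Φvj, Φvm]
      exact h2
  have ΦEA : ∀ γ ∈ EA, Φ γ ∈ EB := by
    intro γ hγ
    rw [memEA] at hγ
    rw [memEB]
    obtain ⟨⟨hBγ, h2⟩, h1⟩ := hγ
    refine ⟨prop_B_swap γ hBγ, ?_⟩
    show ¬ Disjoint (Φ γ vj1) (Φ γ vm)
    rw [Φvj1, Φvm]
    exact h1
  have ΦEB : ∀ γ ∈ EB, Φ γ ∈ EA := by
    intro γ hγ
    rw [memEB] at hγ
    rw [memEA]
    obtain ⟨hBγ, h2⟩ := hγ
    obtain ⟨α, β, ξ, hα, hβ, hξ, hab⟩ := sing γ hBγ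
    have hbx : β = ξ := by
      by_contra hne'
      apply h2
      show Disjoint (γ vj1) (γ vm)
      rw [hβ, hξ]
      exact Finset.disjoint_singleton.mpr hne'
    refine ⟨⟨prop_B_swap γ hBγ, ?_⟩, ?_⟩
    · show Disjoint (Φ γ vj1) (Φ γ vm)
      rw [Φvj1, Φvm, hα, hξ, Finset.disjoint_singleton]
      intro hh
      exact hab (by rw [hh, ← hbx])
    · show ¬ Disjoint (Φ γ vj) (Φ γ vm)
      rw [Φvj, Φvm, hβ, hξ]
      intro hdisj
      exact (Finset.disjoint_singleton.mp hdisj) hbx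
  have claimP :
      (∑ γ ∈ Sh, W γ * X ^ (asc n I B γ + Ee (γ vj) (γ vm) + Ee (γ vj1) (γ vm)))
        + X * ∑ γ ∈ Sh, W γ * X ^ asc n I B γ
      = (1 + X) * ∑ γ ∈ Sh, W γ * X ^ (asc n I B γ + Ee (γ vj1) (γ vm)) := by
    rw [Finset.mul_sum, Finset.mul_sum, ← Finset.sum_add_distrib]
    refine CsfAux.sum_invol_cancel ΦSh Φinv _ _ ?_
    intro γ hγ
    rw [memSh] at hγ
    obtain ⟨⟨hBγ, h2⟩, h1⟩ := hγ
    obtain ⟨α, β, ξ, hα, hβ, hξ, hab⟩ := sing γ hBγ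
    have hax : α ≠ ξ := by
      have hh : Disjoint (γ vj) (γ vm) := h1
      rw [hα, hξ, Finset.disjoint_singleton] at hh
      exact hh
    have hbx : β ≠ ξ := by
      have hh : Disjoint (γ vj1) (γ vm) := h2
      rw [hβ, hξ, Finset.disjoint_singleton] at hh
      exact hh
    have hrel := asc_B_swap γ
    rw [hα, hβ] at hrel
    rw [WΦ, Φvj, Φvj1, Φvm, hα, hβ, hξ]
    have hab' : (α:ℕ) ≠ (β:ℕ) := fun hh => hab (Fin.ext hh)
    have hax' : (α:ℕ) ≠ (ξ:ℕ) := fun hh => hax (Fin.ext hh)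
    have hbx' : (β:ℕ) ≠ (ξ:ℕ) := fun hh => hbx (Fin.ext hh)
    simp only [EeSing, Fin.lt_def] at hrel ⊢
    exact CsfAux.pairP X (W γ) (↑α) (↑β) (↑ξ) (asc n I B γ) (asc n I B (Φ γ)) hab' hax' hbx' hrel
  have claimE :
      X * (∑ γ ∈ EA, W γ * X ^ asc n I B γ) + X * (∑ γ ∈ EB, W γ * X ^ asc n I B γ)
      = (1 + X) * ∑ γ ∈ EA, W γ * X ^ (asc n I B γ + Ee (γ vj1) (γ vm)) := by
    have treb : (∑ γ ∈ EB, W γ * X ^ asc n I B γ)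
        = ∑ γ ∈ EA, W (Φ γ) * X ^ asc n I B (Φ γ) :=
      CsfAux.sum_swap_reindex ΦEA ΦEB Φinv _
    rw [treb, Finset.mul_sum, Finset.mul_sum, Finset.mul_sum, ← Finset.sum_add_distrib]
    refine Finset.sum_congr rfl ?_
    intro γ hγ
    rw [memEA] at hγ
    obtain ⟨⟨hBγ, h2⟩, h1⟩ := hγ
    obtain ⟨α, β, ξ, hα, hβ, hξ, hab⟩ := sing γ hBγ
    have hbx : β ≠ ξ := by
      have hh : Disjoint (γ vj1) (γ vm) := h2
      rw [hβ, hξ, Finset.disjoint_singleton] at hh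
      exact hh
    have hax : α = ξ := by
      by_contra hne'
      apply h1
      show Disjoint (γ vj) (γ vm)
      rw [hα, hξ]
      exact Finset.disjoint_singleton.mpr hne'
    have hrel := asc_B_swap γ
    rw [hα, hβ] at hrel
    rw [WΦ, hβ, hξ]
    have hab' : (α:ℕ) ≠ (β:ℕ) := fun hh => hab (Fin.ext hh)
    have hax' : (α:ℕ) = (ξ:ℕ) := by rw [hax]
    simp only [EeSing, Fin.lt_def] at hrel ⊢
    exact CsfAux.pairE X (W γ) (↑α) (↑β) (↑ξ) (asc n I B γ) (asc n I B (Φ γ)) hab' hax' hrel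
  have hShfilt : Finset.univ.filter (fun γ : VT → Finset (Fin N) => IsProper n I h γ) = Sh := by
    rw [hShdef, hSAdef, Finset.filter_filter]
    ext γ
    simp only [Finset.mem_filter, Finset.mem_univ, true_and]
    rw [memSB]
    constructor
    · intro hγ
      have := (prop_h_iff γ).mp hγ
      exact ⟨this.1, this.2.1, this.2.2⟩
    · intro ⟨hh1, hh2, hh3⟩
      exact (prop_h_iff γ).mpr ⟨hh1, hh2, hh3⟩
  have hSAfilt : Finset.univ.filter (fun γ : VT → Finset (Fin N) => IsProper n I A γ) = SA := by
    rw [hSAdef]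
    ext γ
    simp only [Finset.mem_filter, Finset.mem_univ, true_and]
    rw [memSB]
    exact prop_A_iff γ
  have hcsf_h : csf n I h N
      = ∑ γ ∈ Sh, W γ * X ^ (asc n I B γ + Ee (γ vj) (γ vm) + Ee (γ vj1) (γ vm)) := by
    rw [csfdef h, hShfilt]
    exact Finset.sum_congr rfl fun γ _ => by rw [asc_h_eq γ]
  have hcsf_A : csf n I A N
      = ∑ γ ∈ SA, W γ * X ^ (asc n I B γ + Ee (γ vj1) (γ vm)) := by
    rw [csfdef A, hSAfilt]
    exact Finset.sum_congr rfl fun γ _ => by rw [asc_A_eq γ]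
  have hcsf_B : csf n I B N = ∑ γ ∈ SB, W γ * X ^ asc n I B γ := by
    rw [csfdef B, ← hSBdef]
  have splitA : ∀ f : (VT → Finset (Fin N)) → Polynomial (MvPolynomial (Fin N) ℤ),
      ∑ γ ∈ SA, f γ = ∑ γ ∈ Sh, f γ + ∑ γ ∈ EA, f γ := by
    intro f
    rw [hShdef, hEAdef]
    exact (Finset.sum_filter_add_sum_filter_not SA P1 f).symm
  have splitB : ∀ f : (VT → Finset (Fin N)) → Polynomial (MvPolynomial (Fin N) ℤ),
      ∑ γ ∈ SB, f γ = ∑ γ ∈ SA, f γ + ∑ γ ∈ EB, f γ := by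
    intro f
    rw [hSAdef, hEBdef]
    exact (Finset.sum_filter_add_sum_filter_not SB P2 f).symm
  rw [hcsf_h, hcsf_A, hcsf_B, splitA, splitB, splitA]
  linear_combination claimP + claimE
end
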